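/- arXiv:2301.08701 — 8 statements merged into one kernel-verified Lean document; each statement's English description precedes it below -/
import Mathlib

section
/- For each n ∈ {3, 4, 5, 7}, the poset P with underlying set ℤ/nℤ × {0,1,2} and order generated by the relations (i,0) < (i,1) < (i,2) and (i,0) < (i+1,2) for every i ∈ ℤ/nℤ (indices modulo n) has automorphism group isomorphic to ℤ/nℤ. -/
section Aux

variable {n : ℕ} {P : Type} [PartialOrder P] (e : P ≃ ZMod n × Fin 3)
variable (h : ∀ x y : P, x < y ↔
      (((e x).1 = (e y).1 ∧ (e x).2 < (e y).2) ∨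
       ((e y).1 = (e x).1 + 1 ∧ (e x).2 = 0 ∧ (e y).2 = 2)))

include h

/-- levels are preserved by any automorphism -/
theorem frucht_lvl (f : P ≃o P) (x : P) : (e (f x)).2 = (e x).2 := by
  have hmax : ∀ z : P, (∀ y, ¬ z < y) ↔ (e z).2 = 2 := by
    intro z
    constructor
    · intro hz
      by_contra h2
      apply hz (e.symm ((e z).1, 2))
      rw [h]
      left
      simp only [Equiv.apply_symm_apply]
      refine ⟨by simp, ?_⟩
      fin_omega
    · intro h2 y hy
      rw [h] at hy
      rcases hy with ⟨_, hlt⟩ | ⟨_, h0, _⟩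
      · rw [h2] at hlt; fin_omega
      · rw [h2] at h0; exact absurd h0 (by decide)
  have hmin : ∀ z : P, (∀ y, ¬ y < z) ↔ (e z).2 = 0 := by
    intro z
    constructor
    · intro hz
      by_contra h2
      apply hz (e.symm ((e z).1, 0))
      rw [h]
      left
      simp only [Equiv.apply_symm_apply]
      refine ⟨by simp, ?_⟩
      fin_omega
    · intro h2 y hy
      rw [h] at hy
      rcases hy with ⟨_, hlt⟩ | ⟨_, _, h0⟩
      · rw [h2] at hlt; fin_omega
      · rw [h2] at h0; exact absurd h0 (by decide)
  have e2 : (e (f x)).2 = 2 ↔ (e x).2 = 2 := by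
    rw [← hmax, ← hmax]
    constructor
    · intro hz y hy
      exact hz (f y) (f.lt_iff_lt.mpr hy)
    · intro hz y hy
      exact hz (f.symm y) (f.lt_iff_lt.mp (by simpa using hy))
  have e0 : (e (f x)).2 = 0 ↔ (e x).2 = 0 := by
    rw [← hmin, ← hmin]
    constructor
    · intro hz y hy
      exact hz (f y) (f.lt_iff_lt.mpr hy)
    · intro hz y hy
      exact hz (f.symm y) (f.lt_iff_lt.mp (by simpa using hy))
  fin_omega

variable (h1 : (1 : ZMod n) ≠ 0) [NeZero n]

include h1

/-- any automorphism is a rotation -/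
theorem frucht_key (f : P ≃o P) (x : P) :
    e (f x) = ((e x).1 + (e (f (e.symm ((0 : ZMod n), (0 : Fin 3))))).1, (e x).2) := by
  set F : Fin 3 → ZMod n → ZMod n := fun j i => (e (f (e.symm (i, j)))).1 with hF
  have lvl : ∀ (i : ZMod n) (j : Fin 3), (e (f (e.symm (i, j)))).2 = j := by
    intro i j
    rw [frucht_lvl e h f]
    simp
  have hlt01 : ∀ i : ZMod n, F 1 i = F 0 i := by
    intro i
    have : e.symm (i, (0 : Fin 3)) < e.symm (i, 1) := by
      rw [h]; left; simp
    have := (h _ _).mp (f.lt_iff_lt.mpr this)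
    rcases this with ⟨hc, _⟩ | ⟨_, _, hc⟩
    · exact hc.symm
    · rw [lvl] at hc; exact absurd hc (by decide)
  have hlt12 : ∀ i : ZMod n, F 2 i = F 1 i := by
    intro i
    have : e.symm (i, (1 : Fin 3)) < e.symm (i, 2) := by
      rw [h]; left; simp
    have := (h _ _).mp (f.lt_iff_lt.mpr this)
    rcases this with ⟨hc, _⟩ | ⟨_, hc, _⟩
    · exact hc.symm
    · rw [lvl] at hc; exact absurd hc (by decide)
  have hstep : ∀ i : ZMod n, F 0 (i + 1) = F 0 i + 1 := by
    intro i
    have : e.symm (i, (0 : Fin 3)) < e.symm (i + 1, 2) := by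
      rw [h]; right; simp
    have hd := (h _ _).mp (f.lt_iff_lt.mpr this)
    rcases hd with ⟨hc, _⟩ | ⟨hc, _, _⟩
    · -- F 2 (i+1) = F 0 i = F 2 i : contradiction with injectivity
      exfalso
      have h2 : F 2 (i + 1) = F 2 i := by
        have hx0 : F 2 (i + 1) = F 0 i := hc.symm
        rw [hx0, ← hlt01, ← hlt12]
      have : e (f (e.symm (i + 1, (2 : Fin 3)))) = e (f (e.symm (i, (2 : Fin 3)))) := by
        ext
        · exact h2
        · rw [lvl, lvl]
      have := e.symm.injective (f.injective (e.injective this))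
      have := (Prod.ext_iff.mp this).1
      exact h1 (by linear_combination this)
    · have : F 2 (i + 1) = F 0 i + 1 := hc
      rw [← hlt01, ← hlt12]
      exact this
  have hnat : ∀ k : ℕ, F 0 ((k : ZMod n)) = F 0 0 + k := by
    intro k
    induction k with
    | zero => simp
    | succ m ih => push_cast; rw [hstep, ih]; ring
  have hall : ∀ i : ZMod n, F 0 i = F 0 0 + i := by
    intro i
    have := hnat i.val
    rwa [ZMod.natCast_val, ZMod.cast_id] at this
  have hx : x = e.symm ((e x).1, (e x).2) := by simp
  refine Prod.ext ?_ ?_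
  · show (e (f x)).1 = _
    conv_lhs => rw [hx]
    have h2 : (e (f x)).2 = (e x).2 := frucht_lvl e h f x
    have : ∀ j : Fin 3, F j (e x).1 = F 0 (e x).1 := by
      intro j
      match j with
      | 0 => rfl
      | 1 => exact hlt01 _
      | 2 => rw [hlt12, hlt01]
    show F (e x).2 (e x).1 = _
    rw [this, hall]
    ring
  · show (e (f x)).2 = (e x).2
    exact frucht_lvl e h f x

/-- the rotation by `c` as an order automorphism -/
noncomputable def frucht_rot (c : ZMod n) : P ≃o P where
  toEquiv := e.trans (((Equiv.addRight c).prodCongr (Equiv.refl (Fin 3))).trans e.symm)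
  map_rel_iff' := by
    intro a b
    have key : ∀ x y : P,
        (e.trans (((Equiv.addRight c).prodCongr (Equiv.refl (Fin 3))).trans e.symm)) x <
        (e.trans (((Equiv.addRight c).prodCongr (Equiv.refl (Fin 3))).trans e.symm)) y ↔ x < y := by
      intro x y
      rw [h, h]
      simp only [Equiv.trans_apply, Equiv.prodCongr_apply, Equiv.coe_refl, Prod.map_fst,
        Prod.map_snd, Equiv.apply_symm_apply, Equiv.coe_addRight, id_eq]
      constructor
      · rintro (⟨hc, hl⟩ | ⟨hc, hl⟩)
        · left; exact ⟨by linear_combination hc, hl⟩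
        · right; exact ⟨by linear_combination hc, hl⟩
      · rintro (⟨hc, hl⟩ | ⟨hc, hl⟩)
        · left; exact ⟨by linear_combination hc, hl⟩
        · right; exact ⟨by linear_combination hc, hl⟩
    constructor
    · intro hab
      rcases lt_or_eq_of_le hab with hlt | heq
      · exact le_of_lt ((key a b).mp hlt)
      · exact le_of_eq (by
          have := (e.trans (((Equiv.addRight c).prodCongr (Equiv.refl (Fin 3))).trans e.symm)).injective heq
          exact this)
    · intro hab
      rcases lt_or_eq_of_le hab with hlt | heq
      · exact le_of_lt ((key a b).mpr hlt)
      · exact le_of_eq (congrArg _ heq)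

theorem frucht_aux : Nonempty ((P ≃o P) ≃* Multiplicative (ZMod n)) := by
  set Φ : (P ≃o P) →* Multiplicative (ZMod n) :=
    { toFun := fun f => Multiplicative.ofAdd (e (f (e.symm ((0 : ZMod n), (0 : Fin 3))))).1
      map_one' := by simp
      map_mul' := by
        intro f g
        have hg := frucht_key e h h1 g (e.symm ((0 : ZMod n), (0 : Fin 3)))
        have hf := frucht_key e h h1 f (g (e.symm ((0 : ZMod n), (0 : Fin 3))))
        show Multiplicative.ofAdd (e (f (g _))).1 = _
        rw [hf, ← ofAdd_add]
        congr 1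
        show (e (g _)).1 + _ = _
        rw [hg]
        simp only [Equiv.apply_symm_apply]
        ring } with hΦ
  refine ⟨MulEquiv.ofBijective Φ ⟨?_, ?_⟩⟩
  · intro f g hfg
    have hc : (e (f (e.symm ((0 : ZMod n), (0 : Fin 3))))).1
        = (e (g (e.symm ((0 : ZMod n), (0 : Fin 3))))).1 := by
      simpa [hΦ] using hfg
    ext x
    have hf := frucht_key e h h1 f x
    have hg := frucht_key e h h1 g x
    have : e (f x) = e (g x) := by rw [hf, hg, hc]
    exact e.injective this
  · intro c
    refine ⟨frucht_rot e h (Multiplicative.toAdd c), ?_⟩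
    simp only [hΦ, MonoidHom.coe_mk, OneHom.coe_mk]
    have : e ((frucht_rot e h (Multiplicative.toAdd c)) (e.symm ((0 : ZMod n), (0 : Fin 3))))
        = ((0 : ZMod n) + Multiplicative.toAdd c, (0 : Fin 3)) := by
      show e (e.symm _) = _
      simp [frucht_rot, Prod.map, Prod.ext_iff]
    rw [this]
    simp

end Aux

/-- For `n ∈ {3,4,5,7}`, the poset on `ℤ/nℤ × {0,1,2}` whose order is generated by
`(i,0) < (i,1) < (i,2)` and `(i,0) < (i+1,2)` (so the strict order relation is:
`x < y` iff they are in the same column with smaller second coordinate, or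
`y` is in the next column, `x` has level `0` and `y` has level `2`)
has automorphism group isomorphic to `ℤ/nℤ`. -/
theorem aut_frucht_poset (n : ℕ) (hn : n = 3 ∨ n = 4 ∨ n = 5 ∨ n = 7)
    (P : Type) [PartialOrder P] (e : P ≃ ZMod n × Fin 3)
    (h : ∀ x y : P, x < y ↔
      (((e x).1 = (e y).1 ∧ (e x).2 < (e y).2) ∨
       ((e y).1 = (e x).1 + 1 ∧ (e x).2 = 0 ∧ (e y).2 = 2))) :
    Nonempty ((P ≃o P) ≃* Multiplicative (ZMod n)) := by
  rcases hn with rfl | rfl | rfl | rfl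
  all_goals exact frucht_aux e h (by decide)
end

section
/- There exists a finite poset P with exactly 20 points whose automorphism group Aut(P) is isomorphic to the cyclic group ℤ/12ℤ. -/
set_option synthInstance.maxSize 2000
set_option synthInstance.maxHeartbeats 1000000

open Fin.NatCast

/-!
We construct a poset on 20 points whose automorphism group is cyclic of order 12.

Elements (as `Fin 20`):
* `A i = i` for `i < 6` : a 6-element antichain (indices mod 6)
* `B m = 6 + m` for `m < 6` : `A i ≤ B m ↔ (i - m) % 6 ∈ {0,1,3}`
* `Pp j = 12 + j` for `j < 4` : `A i ≤ Pp j ↔ i ≡ j [mod 2]`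
* `Qq k = 16 + k` for `k < 4` : `A i ≤ Qq k` always, `Pp j ≤ Qq k ↔ (k-j) % 4 ∈ {0,1}`,
  `B m ≤ Qq k ↔ m ≡ k [mod 2]`.

The automorphism group is generated by the "rotation" `g` (adding 1 to each index),
which has order `lcm 6 4 = 12`, and is isomorphic to `ℤ/12`.
-/

def MyP : Type := Fin 20

def leB (x y : MyP) : Bool :=
  x.val = y.val ||
  (x.val < 6 && 6 ≤ y.val && y.val < 12 &&
    ((x.val + 6 - (y.val - 6)) % 6 = 0 || (x.val + 6 - (y.val - 6)) % 6 = 1 ||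
      (x.val + 6 - (y.val - 6)) % 6 = 3)) ||
  (x.val < 6 && 12 ≤ y.val && y.val < 16 && (x.val + y.val) % 2 = 0) ||
  (x.val < 6 && 16 ≤ y.val) ||
  (12 ≤ x.val && x.val < 16 && 16 ≤ y.val && ((y.val - 16) + 4 - (x.val - 12)) % 4 ≤ 1) ||
  (6 ≤ x.val && x.val < 12 && 16 ≤ y.val && (x.val + y.val) % 2 = 0)

instance instDecEqMyP : DecidableEq MyP := inferInstanceAs (DecidableEq (Fin 20))
instance instFintypeMyP : Fintype MyP := inferInstanceAs (Fintype (Fin 20))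

instance instPartialOrderMyP : PartialOrder MyP where
  le x y := leB x y = true
  le_refl := fun a => (by decide : ∀ a : MyP, leB a a = true) a
  le_trans := fun a b c =>
    (by decide : ∀ a b c : MyP, leB a b = true → leB b c = true → leB a c = true) a b c
  le_antisymm := fun a b =>
    (by decide : ∀ a b : MyP, leB a b = true → leB b a = true → a = b) a b

instance instDecLEMyP : DecidableRel ((· ≤ ·) : MyP → MyP → Prop) :=
  fun x y => inferInstanceAs (Decidable (leB x y = true))

/-- the named elements -/
def A (i : Fin 6) : MyP := ⟨i.val, i.isLt.trans (by norm_num)⟩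
def B (m : Fin 6) : MyP := ⟨6 + m.val, by have := m.isLt; omega⟩
def Pp (j : Fin 4) : MyP := ⟨12 + j.val, by have := j.isLt; omega⟩
def Qq (k : Fin 4) : MyP := ⟨16 + k.val, by have := k.isLt; omega⟩

/-- size of the down-set -/
def dcard (x : MyP) : ℕ := (Finset.univ.filter (fun y => y ≤ x)).card

/-- table of down-set sizes -/
def tbl (x : MyP) : ℕ := if x.val < 6 then 1 else if x.val < 16 then 4 else 12

lemma dcard_eq_tbl : ∀ x : MyP, dcard x = tbl x := by decide

/-- "x is a `P`-type point": there is a twin with the same down-set among the minimals -/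
def pex (x : MyP) : Prop :=
  ∃ z : MyP, z ≠ x ∧ tbl z = 4 ∧ ∀ w : MyP, tbl w = 1 → (w ≤ x ↔ w ≤ z)

instance : DecidablePred pex := fun x => by unfold pex; infer_instance

lemma dcard_apply (f : MyP ≃o MyP) (x : MyP) : dcard (f x) = dcard x := by
  have hset : (Finset.univ.filter (fun y => y ≤ f x)) =
      (Finset.univ.filter (fun y => y ≤ x)).map f.toEquiv.toEmbedding := by
    ext y
    simp only [Finset.mem_filter, Finset.mem_univ, true_and, Finset.mem_map,
      Equiv.coe_toEmbedding]
    constructor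
    · intro h
      refine ⟨f.symm y, ?_, f.apply_symm_apply y⟩
      have h2 := f.symm.monotone h
      rwa [OrderIso.symm_apply_apply] at h2
    · rintro ⟨z, hz, rfl⟩
      exact f.le_iff_le.mpr hz
  unfold dcard
  rw [hset, Finset.card_map]

lemma tbl_apply (f : MyP ≃o MyP) (x : MyP) : tbl (f x) = tbl x := by
  rw [← dcard_eq_tbl, ← dcard_eq_tbl, dcard_apply]

lemma pex_apply_mp (f : MyP ≃o MyP) (x : MyP) (h : pex x) : pex (f x) := by
  obtain ⟨z, hzx, hz4, hzw⟩ := h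
  refine ⟨f z, fun h' => hzx (f.injective h'), by rw [tbl_apply]; exact hz4, ?_⟩
  intro w hw1
  have hw' : tbl (f.symm w) = 1 := by rw [tbl_apply]; exact hw1
  have hiff := hzw (f.symm w) hw'
  rw [← f.apply_symm_apply w, f.le_iff_le, f.le_iff_le]
  exact hiff

lemma pex_apply (f : MyP ≃o MyP) (x : MyP) : pex (f x) ↔ pex x := by
  constructor
  · intro h
    have h2 := pex_apply_mp f.symm (f x) h
    rwa [OrderIso.symm_apply_apply] at h2
  · exact pex_apply_mp f x

/-- class characterizations -/
lemma cA : ∀ x : MyP, tbl x = 1 ↔ x.val < 6 := by decide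
lemma cB : ∀ x : MyP, (tbl x = 4 ∧ ¬ pex x) ↔ (6 ≤ x.val ∧ x.val < 12) := by decide
lemma cP : ∀ x : MyP, (tbl x = 4 ∧ pex x) ↔ (12 ≤ x.val ∧ x.val < 16) := by decide
lemma cQ : ∀ x : MyP, tbl x = 12 ↔ 16 ≤ x.val := by decide

/-- combinatorial relations -/
def triB (m i : Fin 6) : Bool := i = m || i = m + 1 || i = m + 3
def crownB (j k : Fin 4) : Bool := (k - j).val ≤ 1

lemma relAB : ∀ (i m : Fin 6), A i ≤ B m ↔ triB m i = true := by decide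
lemma relAP : ∀ (i : Fin 6) (j : Fin 4), A i ≤ Pp j ↔ i.val % 2 = j.val % 2 := by decide
lemma relBQ : ∀ (m : Fin 6) (k : Fin 4), B m ≤ Qq k ↔ m.val % 2 = k.val % 2 := by decide
lemma relPQ : ∀ (j k : Fin 4), Pp j ≤ Qq k ↔ crownB j k = true := by decide

/-- decision lemma for the action on the antichain `A` -/
theorem D1 : ∀ v0 v1 : Fin 6, v1 ≠ v0 → ∀ v2, v2 ≠ v0 → v2 ≠ v1 →
    ∀ v3, v3 ≠ v0 → v3 ≠ v1 → v3 ≠ v2 → ∀ v4, v4 ≠ v0 → v4 ≠ v1 → v4 ≠ v2 → v4 ≠ v3 →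
    ∀ v5, v5 ≠ v0 → v5 ≠ v1 → v5 ≠ v2 → v5 ≠ v3 → v5 ≠ v4 →
    (∀ m : Fin 6, ∃ m' : Fin 6, ∀ i, triB m i = true ↔ triB m' (![v0,v1,v2,v3,v4,v5] i) = true) →
    (∃ c : Fin 2, ∀ i : Fin 6, (i.val % 2 = 0 ↔ (![v0,v1,v2,v3,v4,v5] i).val % 2 = c.val)) →
    ∃ t : Fin 6, ∀ i, ![v0,v1,v2,v3,v4,v5] i = i + t := by decide

theorem D1b : ∀ (m m' t : Fin 6),
    (∀ i, triB m i = true ↔ triB m' (i + t) = true) → m' = m + t := by decide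

theorem D1c : ∀ (t : Fin 6) (j j' : Fin 4),
    (∀ i : Fin 6, (i.val % 2 = j.val % 2 ↔ (i + t).val % 2 = j'.val % 2)) →
    j'.val % 2 = (j.val + t.val) % 2 := by decide

/-- decision lemma for the action on the crown `Pp, Qq` -/
theorem D2 : ∀ (e : Fin 2) (s0 : Fin 4), s0.val % 2 = e.val →
    ∀ s1, s1.val % 2 = (1 + e.val) % 2 → ∀ s2, s2.val % 2 = e.val → s2 ≠ s0 →
    ∀ s3, s3.val % 2 = (1 + e.val) % 2 → s3 ≠ s1 →
    ∀ u0, u0.val % 2 = e.val → ∀ u1, u1.val % 2 = (1 + e.val) % 2 →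
    ∀ u2, u2.val % 2 = e.val → u2 ≠ u0 → ∀ u3, u3.val % 2 = (1 + e.val) % 2 → u3 ≠ u1 →
    (∀ j k : Fin 4, crownB j k = true ↔ crownB (![s0,s1,s2,s3] j) (![u0,u1,u2,u3] k) = true) →
    ∃ r : Fin 4, r.val % 2 = e.val ∧ (∀ j, ![s0,s1,s2,s3] j = j + r) ∧
      (∀ k, ![u0,u1,u2,u3] k = k + r) := by decide

theorem Dk : ∀ (t : Fin 6) (r : Fin 4), r.val % 2 = t.val % 2 →
    ∃ k : Fin 12, k.val % 6 = t.val ∧ k.val % 4 = r.val := by decide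

/-- the rotation and its inverse -/
def rotF (x : MyP) : MyP :=
  if x.val < 6 then ⟨(x.val + 1) % 6, by omega⟩
  else if x.val < 12 then ⟨6 + (x.val - 5) % 6, by omega⟩
  else if x.val < 16 then ⟨12 + (x.val - 11) % 4, by omega⟩
  else ⟨16 + (x.val - 15) % 4, by omega⟩

def rotInv (x : MyP) : MyP :=
  if x.val < 6 then ⟨(x.val + 5) % 6, by omega⟩
  else if x.val < 12 then ⟨6 + (x.val - 1) % 6, by omega⟩
  else if x.val < 16 then ⟨12 + (x.val - 9) % 4, by omega⟩
  else ⟨16 + (x.val - 13) % 4, by omega⟩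

def g : MyP ≃o MyP where
  toFun := rotF
  invFun := rotInv
  left_inv := by intro x; revert x; decide
  right_inv := by intro x; revert x; decide
  map_rel_iff' := by
    intro a b
    exact (by decide : ∀ a b : MyP, rotF a ≤ rotF b ↔ a ≤ b) a b

lemma gstepA : ∀ i : Fin 6, g (A i) = A (i + 1) := by decide
lemma gstepB : ∀ m : Fin 6, g (B m) = B (m + 1) := by decide
lemma gstepP : ∀ j : Fin 4, g (Pp j) = Pp (j + 1) := by decide
lemma gstepQ : ∀ k : Fin 4, g (Qq k) = Qq (k + 1) := by decide

lemma oiso_mul_apply (f h : MyP ≃o MyP) (x : MyP) : (f * h) x = f (h x) := rfl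
lemma oiso_one_apply (x : MyP) : (1 : MyP ≃o MyP) x = x := rfl

lemma gA : ∀ (n : ℕ) (i : Fin 6), (g ^ n) (A i) = A (i + (n : Fin 6)) := by
  intro n
  induction n with
  | zero => intro i; rw [pow_zero, oiso_one_apply, Nat.cast_zero, add_zero]
  | succ n ih =>
      intro i
      rw [pow_succ', oiso_mul_apply, ih, gstepA, Nat.cast_add, Nat.cast_one, add_assoc]

lemma gB : ∀ (n : ℕ) (m : Fin 6), (g ^ n) (B m) = B (m + (n : Fin 6)) := by
  intro n
  induction n with
  | zero => intro m; rw [pow_zero, oiso_one_apply, Nat.cast_zero, add_zero]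
  | succ n ih =>
      intro m
      rw [pow_succ', oiso_mul_apply, ih, gstepB, Nat.cast_add, Nat.cast_one, add_assoc]

lemma gP : ∀ (n : ℕ) (j : Fin 4), (g ^ n) (Pp j) = Pp (j + (n : Fin 4)) := by
  intro n
  induction n with
  | zero => intro j; rw [pow_zero, oiso_one_apply, Nat.cast_zero, add_zero]
  | succ n ih =>
      intro j
      rw [pow_succ', oiso_mul_apply, ih, gstepP, Nat.cast_add, Nat.cast_one, add_assoc]

lemma gQ : ∀ (n : ℕ) (k : Fin 4), (g ^ n) (Qq k) = Qq (k + (n : Fin 4)) := by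
  intro n
  induction n with
  | zero => intro k; rw [pow_zero, oiso_one_apply, Nat.cast_zero, add_zero]
  | succ n ih =>
      intro k
      rw [pow_succ', oiso_mul_apply, ih, gstepQ, Nat.cast_add, Nat.cast_one, add_assoc]

lemma casesMyP : ∀ x : MyP, (∃ i : Fin 6, x = A i) ∨ (∃ m : Fin 6, x = B m) ∨
    (∃ j : Fin 4, x = Pp j) ∨ (∃ k : Fin 4, x = Qq k) := by decide

lemma val_A (i : Fin 6) : (A i : Fin 20).val = i.val := rfl
lemma A_inj {a b : Fin 6} (h : A a = A b) : a = b := by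
  have : a.val = b.val := congrArg (fun z : Fin 20 => z.val) h
  exact Fin.ext this
lemma B_inj {a b : Fin 6} (h : B a = B b) : a = b := by
  have : 6 + a.val = 6 + b.val := congrArg (fun z : Fin 20 => z.val) h
  exact Fin.ext (by omega)
lemma Qq_inj {a b : Fin 4} (h : Qq a = Qq b) : a = b := by
  have : 16 + a.val = 16 + b.val := congrArg (fun z : Fin 20 => z.val) h
  exact Fin.ext (by omega)
lemma P_inj {a b : Fin 4} (h : Pp a = Pp b) : a = b := by
  have : 12 + a.val = 12 + b.val := congrArg (fun z : Fin 20 => z.val) h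
  exact Fin.ext (by omega)

/-- The classification of automorphisms: every order automorphism is a power of `g`. -/
theorem classify (f : MyP ≃o MyP) : ∃ k : Fin 12, f = g ^ (k.val : ℕ) := by
  -- the four classes are preserved
  have htbl : ∀ x, tbl (f x) = tbl x := tbl_apply f
  have hpex : ∀ x, pex (f x) ↔ pex x := pex_apply f
  -- action on the A's
  have hAval : ∀ i : Fin 6, (f (A i)).val < 6 := by
    intro i
    exact (cA _).mp (by rw [htbl]; exact (cA _).mpr (by exact i.isLt))
  have hBval : ∀ m : Fin 6, 6 ≤ (f (B m)).val ∧ (f (B m)).val < 12 := by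
    intro m
    refine (cB _).mp ⟨by rw [htbl]; exact ((cB (B m)).mpr (by simp [B]; omega)).1, ?_⟩
    rw [hpex]
    exact ((cB (B m)).mpr (by simp [B]; omega)).2
  have hPval : ∀ j : Fin 4, 12 ≤ (f (Pp j)).val ∧ (f (Pp j)).val < 16 := by
    intro j
    refine (cP _).mp ⟨by rw [htbl]; exact ((cP (Pp j)).mpr (by simp [Pp]; omega)).1, ?_⟩
    rw [hpex]
    exact ((cP (Pp j)).mpr (by simp [Pp]; omega)).2
  have hQval : ∀ k : Fin 4, 16 ≤ (f (Qq k)).val := by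
    intro k
    exact (cQ _).mp (by rw [htbl]; exact (cQ (Qq k)).mpr (by simp [Qq]))
  -- index maps
  let π : Fin 6 → Fin 6 := fun i => ⟨(f (A i)).val, hAval i⟩
  let ρ : Fin 6 → Fin 6 := fun m => ⟨(f (B m)).val - 6, by have := hBval m; omega⟩
  let σ : Fin 4 → Fin 4 := fun j => ⟨(f (Pp j)).val - 12, by have := hPval j; omega⟩
  let τ : Fin 4 → Fin 4 := fun k => ⟨(f (Qq k)).val - 16, by have := (f (Qq k)).isLt; have := hQval k; omega⟩
  have hfa : ∀ i, f (A i) = A (π i) := by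
    intro i; exact Fin.ext rfl
  have hfb : ∀ m, f (B m) = B (ρ m) := by
    intro m
    refine Fin.ext ?_
    show (f (B m)).val = 6 + ((f (B m)).val - 6)
    have := hBval m; omega
  have hfp : ∀ j, f (Pp j) = Pp (σ j) := by
    intro j
    refine Fin.ext ?_
    show (f (Pp j)).val = 12 + ((f (Pp j)).val - 12)
    have := hPval j; omega
  have hfq : ∀ k, f (Qq k) = Qq (τ k) := by
    intro k
    refine Fin.ext ?_
    show (f (Qq k)).val = 16 + ((f (Qq k)).val - 16)
    have := hQval k; omega
  -- injectivity of index maps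
  have hπinj : ∀ i j, i ≠ j → π i ≠ π j := by
    intro i j hij h
    exact hij (A_inj (f.injective (by rw [hfa, hfa, h])))
  have hσinj : ∀ i j, i ≠ j → σ i ≠ σ j := by
    intro i j hij h
    exact hij (P_inj (f.injective (by rw [hfp, hfp, h])))
  -- relation transfer
  have htri : ∀ m i, (triB m i = true ↔ triB (ρ m) (π i) = true) := by
    intro m i
    rw [← relAB, ← relAB, ← hfa, ← hfb, f.le_iff_le]
  have hpar : ∀ (i : Fin 6) (j : Fin 4), (i.val % 2 = j.val % 2 ↔ (π i).val % 2 = (σ j).val % 2) := by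
    intro i j
    rw [← relAP, ← relAP, ← hfa, ← hfp, f.le_iff_le]
  have hparQ : ∀ (m : Fin 6) (k : Fin 4), (m.val % 2 = k.val % 2 ↔ (ρ m).val % 2 = (τ k).val % 2) := by
    intro m k
    rw [← relBQ, ← relBQ, ← hfb, ← hfq, f.le_iff_le]
  have hcrown : ∀ j k, (crownB j k = true ↔ crownB (σ j) (τ k) = true) := by
    intro j k
    rw [← relPQ, ← relPQ, ← hfp, ← hfq, f.le_iff_le]
  -- vector bridges
  have hvec6 : ∀ i : Fin 6, ![π 0, π 1, π 2, π 3, π 4, π 5] i = π i := by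
    intro i; fin_cases i <;> rfl
  have hvecσ : ∀ j : Fin 4, ![σ 0, σ 1, σ 2, σ 3] j = σ j := by
    intro j; fin_cases j <;> rfl
  have hvecτ : ∀ k : Fin 4, ![τ 0, τ 1, τ 2, τ 3] k = τ k := by
    intro k; fin_cases k <;> rfl
  -- apply D1
  obtain ⟨t, ht⟩ := D1 (π 0) (π 1) (hπinj 1 0 (by decide)) (π 2) (hπinj 2 0 (by decide))
    (hπinj 2 1 (by decide)) (π 3) (hπinj 3 0 (by decide)) (hπinj 3 1 (by decide))
    (hπinj 3 2 (by decide)) (π 4) (hπinj 4 0 (by decide)) (hπinj 4 1 (by decide))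
    (hπinj 4 2 (by decide)) (hπinj 4 3 (by decide)) (π 5) (hπinj 5 0 (by decide))
    (hπinj 5 1 (by decide)) (hπinj 5 2 (by decide)) (hπinj 5 3 (by decide))
    (hπinj 5 4 (by decide))
    (fun m => ⟨ρ m, fun i => by rw [hvec6]; exact htri m i⟩)
    ⟨⟨(σ 0).val % 2, by omega⟩, fun i => by
      rw [hvec6]
      have h0 := hpar i 0
      simpa using h0⟩
  have hπ : ∀ i, π i = i + t := fun i => by rw [← hvec6 i]; exact ht i
  -- determine ρ
  have hρ : ∀ m, ρ m = m + t := by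
    intro m
    refine D1b m (ρ m) t (fun i => ?_)
    rw [← hπ i]
    exact htri m i
  -- parity of σ and τ
  have hσpar : ∀ j, (σ j).val % 2 = (j.val + t.val) % 2 := by
    intro j
    refine D1c t j (σ j) (fun i => ?_)
    rw [← hπ i]
    exact hpar i j
  have hτpar : ∀ k, (τ k).val % 2 = (k.val + t.val) % 2 := by
    intro k
    refine D1c t k (τ k) (fun m => ?_)
    rw [← hρ m]
    exact hparQ m k
  -- apply D2
  obtain ⟨r, hr2, hσr', hτr'⟩ := D2 ⟨t.val % 2, by omega⟩ (σ 0)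
    (by have := hσpar 0; simpa using this)
    (σ 1) (by have := hσpar 1; simp at this ⊢; omega)
    (σ 2) (by have := hσpar 2; simp at this ⊢; omega) (hσinj 2 0 (by decide))
    (σ 3) (by have := hσpar 3; simp at this ⊢; omega) (hσinj 3 1 (by decide))
    (τ 0) (by have := hτpar 0; simpa using this)
    (τ 1) (by have := hτpar 1; simp at this ⊢; omega)
    (τ 2) (by have := hτpar 2; simp at this ⊢; omega)
    (by intro h
        have h2 : f (Qq 2) = f (Qq 0) := by rw [hfq 2, hfq 0, h]
        exact absurd (Qq_inj (f.injective h2)) (by decide))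
    (τ 3) (by have := hτpar 3; simp at this ⊢; omega)
    (by intro h
        have h2 : f (Qq 3) = f (Qq 1) := by rw [hfq 3, hfq 1, h]
        exact absurd (Qq_inj (f.injective h2)) (by decide))
    (fun j k => by rw [hvecσ, hvecτ]; exact hcrown j k)
  have hσ : ∀ j, σ j = j + r := fun j => by rw [← hvecσ j]; exact hσr' j
  have hτ : ∀ k, τ k = k + r := fun k => by rw [← hvecτ k]; exact hτr' k
  -- find the exponent
  obtain ⟨k, hk6, hk4⟩ := Dk t r (by simpa using hr2)
  refine ⟨k, ?_⟩
  have c6 : ((k.val : ℕ) : Fin 6) = t := Fin.ext (by rw [Fin.val_natCast]; exact hk6)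
  have c4 : ((k.val : ℕ) : Fin 4) = r := Fin.ext (by rw [Fin.val_natCast]; exact hk4)
  apply DFunLike.ext
  intro x
  rcases casesMyP x with ⟨i, rfl⟩ | ⟨m, rfl⟩ | ⟨j, rfl⟩ | ⟨kk, rfl⟩
  · rw [hfa i, gA, c6, hπ i]
  · rw [hfb m, gB, c6, hρ m]
  · rw [hfp j, gP, c4, hσ j]
  · rw [hfq kk, gQ, c4, hτ kk]

lemma pow_inj : ∀ k k' : Fin 12, g ^ (k.val : ℕ) = g ^ (k'.val : ℕ) → k = k' := by
  intro k k' h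
  have h1 := DFunLike.congr_fun h (A 0)
  have h2 := DFunLike.congr_fun h (Pp 0)
  rw [gA, gA] at h1
  rw [gP, gP] at h2
  have e1 : ((k.val : ℕ) : Fin 6) = ((k'.val : ℕ) : Fin 6) := by
    have := A_inj h1; simpa using this
  have e2 : ((k.val : ℕ) : Fin 4) = ((k'.val : ℕ) : Fin 4) := by
    have := P_inj h2; simpa using this
  have v1 : k.val % 6 = k'.val % 6 := by
    have := congrArg Fin.val e1
    rwa [Fin.val_natCast, Fin.val_natCast] at this
  have v2 : k.val % 4 = k'.val % 4 := by
    have := congrArg Fin.val e2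
    rwa [Fin.val_natCast, Fin.val_natCast] at this
  have hk := k.isLt
  have hk' := k'.isLt
  exact Fin.ext (by omega)

lemma g_pow_twelve : g ^ (12 : ℕ) = 1 := by
  have c6 : ((12 : ℕ) : Fin 6) = 0 := by decide
  have c4 : ((12 : ℕ) : Fin 4) = 0 := by decide
  apply DFunLike.ext
  intro x
  rcases casesMyP x with ⟨i, rfl⟩ | ⟨m, rfl⟩ | ⟨j, rfl⟩ | ⟨kk, rfl⟩
  · rw [gA, c6, add_zero]; rfl
  · rw [gB, c6, add_zero]; rfl
  · rw [gP, c4, add_zero]; rfl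
  · rw [gQ, c4, add_zero]; rfl

def phi : Multiplicative (ZMod 12) →* (MyP ≃o MyP) where
  toFun m := g ^ ((Multiplicative.toAdd m).val)
  map_one' := by
    show g ^ ((0 : ZMod 12).val) = 1
    rw [ZMod.val_zero, pow_zero]
  map_mul' x y := by
    show g ^ ((Multiplicative.toAdd x + Multiplicative.toAdd y).val) = _
    rw [ZMod.val_add, ← pow_eq_pow_mod _ g_pow_twelve, pow_add]

lemma phi_bijective : Function.Bijective phi := by
  constructor
  · intro x y h
    have h' : g ^ ((Multiplicative.toAdd x).val) = g ^ ((Multiplicative.toAdd y).val) := h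
    have := pow_inj ⟨(Multiplicative.toAdd x).val, ZMod.val_lt _⟩
      ⟨(Multiplicative.toAdd y).val, ZMod.val_lt _⟩ h'
    have hval : (Multiplicative.toAdd x).val = (Multiplicative.toAdd y).val :=
      congrArg Fin.val this
    exact Multiplicative.toAdd.injective (ZMod.val_injective 12 hval)
  · intro f
    obtain ⟨k, hk⟩ := classify f
    refine ⟨Multiplicative.ofAdd ((k.val : ZMod 12)), ?_⟩
    show g ^ (((k.val : ℕ) : ZMod 12).val) = f
    rw [ZMod.val_natCast, Nat.mod_eq_of_lt k.isLt, hk]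

/-- There exists a finite poset with exactly `20` points whose automorphism group is
isomorphic to the cyclic group `ℤ/12ℤ`. -/
theorem exists_poset_card_twenty_aut_Z12 :
    ∃ (P : Type) (instP : PartialOrder P) (instF : Fintype P),
      @Fintype.card P instF = 20 ∧
      Nonempty ((@OrderIso P P instP.toLE instP.toLE) ≃* Multiplicative (ZMod 12)) := by
  refine ⟨MyP, instPartialOrderMyP, instFintypeMyP, Fintype.card_fin 20, ⟨?_⟩⟩
  exact (MulEquiv.ofBijective phi phi_bijective).symm
end

section
/- Let P be a finite poset, g an automorphism of P, and A, B two distinct orbits of ⟨g⟩ on P. Then it is impossible that simultaneously some a ∈ A is strictly smaller than some b ∈ B and some b' ∈ B is strictly smaller than some a' ∈ A. -/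
/-- Let `g` be an automorphism of a finite poset `P` and let `a, a'` lie in one
`⟨g⟩`-orbit and `b, b'` in a different `⟨g⟩`-orbit. Then we cannot have both `a < b`
and `b' < a'`. -/
theorem no_crossing_orbits (P : Type) [PartialOrder P] [Fintype P] (g : P ≃o P)
    (a a' b b' : P)
    (ha : ∃ m : ℤ, (g ^ m) a = a') (hb : ∃ m : ℤ, (g ^ m) b = b')
    (hAB : ¬ ∃ m : ℤ, (g ^ m) a = b) :
    ¬ (a < b ∧ b' < a') := by
  rintro ⟨hab, hba⟩
  obtain ⟨m, hm⟩ := ha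
  obtain ⟨n, hn⟩ := hb
  -- b' < a' means (g^n) b < (g^m) a, hence b < (g^(m-n)) a
  set h : P ≃o P := g ^ (m - n) with hh
  have key : b < h a := by
    have : (g ^ n) b < (g ^ m) a := by rw [hm, hn]; exact hba
    have := (g ^ (-n) : P ≃o P).strictMono this
    have e1 : (g ^ (-n) : P ≃o P) ((g ^ n) b) = b := by
      rw [← RelIso.mul_apply, ← zpow_add, neg_add_cancel, zpow_zero]; rfl
    have e2 : (g ^ (-n) : P ≃o P) ((g ^ m) a) = h a := by
      rw [← RelIso.mul_apply, ← zpow_add, hh, show -n + m = m - n by ring]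
    rwa [e1, e2] at this
  have haha : a < h a := hab.trans key
  have hsm : StrictMono (fun k : ℕ => (h ^ k) a) := by
    apply strictMono_nat_of_lt_succ
    intro k
    have h1 := (h ^ k : P ≃o P).strictMono haha
    rw [← RelIso.mul_apply, ← pow_succ] at h1
    exact h1
  obtain ⟨i, j, hij, hfij⟩ := Finite.exists_ne_map_eq_of_infinite (fun k : ℕ => (h ^ k) a)
  exact hij (hsm.injective hfij)
end

section
/- Let P be a finite poset and g an automorphism of P. Let Q be the subposet of P consisting of the points not fixed by g, and let A₀, A₁, …, A_k be the orbits of the automorphism that g induces on Q. If h is an automorphism of the poset Q such that h(A_i) = A_i for every i, then h extends to an automorphism of P which fixes every element of P ∖ Q. -/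
lemma fix_zpow {P : Type} [PartialOrder P] (g : P ≃o P) (x : P) (hx : g x = x) :
    ∀ m : ℤ, (g ^ m) x = x := by
  have hn : ∀ n : ℕ, (g ^ n) x = x := by
    intro n
    induction n with
    | zero => rfl
    | succ k ih =>
        have : (g ^ (k+1)) x = (g ^ k) (g x) := by rw [pow_succ]; rfl
        rw [this, hx, ih]
  intro m
  induction m using Int.rec with
  | ofNat n => simpa using hn n
  | negSucc n =>
      rw [zpow_negSucc]
      have h1 := hn (n + 1)
      have : (g ^ (n+1))⁻¹ ((g ^ (n+1)) x) = (g ^ (n+1))⁻¹ x := by rw [h1]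
      simpa using this.symm

/-- Let `g` be an automorphism of a finite poset `P` and let `Q` be the subposet of points
not fixed by `g`. If `h` is an automorphism of `Q` leaving each orbit of the automorphism
induced by `g` on `Q` invariant (i.e. `h q` lies in the `⟨g⟩`-orbit of `q` for each `q`),
then `h` extends to an automorphism of `P` fixing every point of `P ∖ Q`. -/
theorem extend_automorphism_of_nonfixed (P : Type) [PartialOrder P] [Fintype P]
    (g : P ≃o P)
    (h : {x : P // g x ≠ x} ≃o {x : P // g x ≠ x})
    (horb : ∀ q : {x : P // g x ≠ x}, ∃ m : ℤ, (g ^ m) q.1 = (h q).1) :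
    ∃ H : P ≃o P, (∀ q : {x : P // g x ≠ x}, H q.1 = (h q).1) ∧
      ∀ x : P, g x = x → H x = x := by
  classical
  -- mixed comparison: for fixed x and nonfixed q
  have key : ∀ (x : P), g x = x → ∀ q : {x : P // g x ≠ x},
      (x ≤ (h q).1 ↔ x ≤ q.1) ∧ ((h q).1 ≤ x ↔ q.1 ≤ x) := by
    intro x hx q
    obtain ⟨m, hm⟩ := horb q
    have hfx := fix_zpow g x hx m
    constructor
    · rw [← hm]
      conv_lhs => rw [← hfx]
      exact (g ^ m).le_iff_le
    · rw [← hm]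
      conv_lhs => rw [← hfx]
      exact (g ^ m).le_iff_le
  refine ⟨{
    toFun := fun x => if hx : g x ≠ x then (h ⟨x, hx⟩).1 else x
    invFun := fun x => if hx : g x ≠ x then (h.symm ⟨x, hx⟩).1 else x
    left_inv := ?_
    right_inv := ?_
    map_rel_iff' := ?_ }, ?_, ?_⟩
  · intro x
    by_cases hx : g x ≠ x
    · simp only [dif_pos hx, dif_pos (h ⟨x, hx⟩).2]
      have : (⟨(h ⟨x, hx⟩).1, (h ⟨x, hx⟩).2⟩ : {x : P // g x ≠ x}) = h ⟨x, hx⟩ := rfl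
      rw [this, h.symm_apply_apply]
    · simp [dif_neg hx]
  · intro x
    by_cases hx : g x ≠ x
    · simp only [dif_pos hx, dif_pos (h.symm ⟨x, hx⟩).2]
      have : (⟨(h.symm ⟨x, hx⟩).1, (h.symm ⟨x, hx⟩).2⟩ : {x : P // g x ≠ x}) =
          h.symm ⟨x, hx⟩ := rfl
      rw [this, h.apply_symm_apply]
    · simp [dif_neg hx]
  · intro a b
    simp only [Equiv.coe_fn_mk]
    by_cases ha : g a ≠ a <;> by_cases hb : g b ≠ b
    · rw [dif_pos ha, dif_pos hb]
      exact h.le_iff_le (x := ⟨a, ha⟩) (y := ⟨b, hb⟩)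
    · rw [dif_pos ha, dif_neg hb]
      push_neg at hb
      exact (key b hb ⟨a, ha⟩).2
    · rw [dif_neg ha, dif_pos hb]
      push_neg at ha
      exact (key a ha ⟨b, hb⟩).1
    · rw [dif_neg ha, dif_neg hb]
  · intro q
    exact dif_pos q.2
  · intro x hx
    exact dif_neg (by simp [hx])
end

section
/- Let n ≥ 1 and let p^r ≠ 2 be a prime power which exactly divides n. Let P be a finite poset with Aut(P) cyclic of order n, and let g be a generator of Aut(P). Then ⟨g⟩ has at least two distinct orbits on P whose cardinality is divisible by p^r. -/
/-- The orbit of `x` under the cyclic group generated by the automorphism `g`. -/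
def orbit {P : Type} [PartialOrder P] (g : P ≃o P) (x : P) : Set P :=
  {y | ∃ m : ℤ, (g ^ m) x = y}

section Aux

variable {P : Type} [PartialOrder P]

/-- The natural monoid hom from order automorphisms to permutations. -/
def oiPerm : (P ≃o P) →* Equiv.Perm P where
  toFun f := f.toEquiv
  map_one' := rfl
  map_mul' _ _ := rfl

lemma oi_zpow_apply (g : P ≃o P) (m : ℤ) (x : P) :
    (g ^ m) x = ((oiPerm g) ^ m) x := by
  rw [← map_zpow oiPerm]; rfl

lemma oi_one_apply (x : P) : (1 : P ≃o P) x = x := rfl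

lemma oi_mul_apply (f h : P ≃o P) (x : P) : (f * h) x = f (h x) := rfl

lemma mem_orbit_self (g : P ≃o P) (x : P) : x ∈ orbit g x :=
  ⟨0, by rw [zpow_zero]; rfl⟩

lemma orbit_eq_of_mem (g : P ≃o P) {x y : P} (h : y ∈ orbit g x) :
    orbit g y = orbit g x := by
  obtain ⟨m, rfl⟩ := h
  ext z
  constructor
  · rintro ⟨i, rfl⟩
    exact ⟨i + m, by rw [zpow_add, oi_mul_apply]⟩
  · rintro ⟨j, rfl⟩
    refine ⟨j - m, ?_⟩
    rw [show ((g ^ (j - m)) ((g ^ m) x) = (g ^ (j - m) * g ^ m) x) from rfl,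
      ← zpow_add, sub_add_cancel]

lemma orbit_eq_mulaction [Fintype P] (g : P ≃o P) (x : P) :
    orbit g x = MulAction.orbit (Subgroup.zpowers (oiPerm g)) x := by
  ext y
  constructor
  · rintro ⟨m, rfl⟩
    refine ⟨⟨(oiPerm g) ^ m, Subgroup.zpow_mem _ (Subgroup.mem_zpowers _) m⟩, ?_⟩
    rw [oi_zpow_apply]; rfl
  · rintro ⟨⟨h, hh⟩, rfl⟩
    obtain ⟨m, rfl⟩ := Subgroup.mem_zpowers_iff.mp hh
    exact ⟨m, by rw [oi_zpow_apply]; rfl⟩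

lemma ncard_orbit_eq [Fintype P] (g : P ≃o P) (x : P) :
    (orbit g x).ncard = Function.minimalPeriod ((oiPerm g) • ·) x := by
  classical
  rw [orbit_eq_mulaction, ← Nat.card_coe_set_eq,
    Nat.card_congr (MulAction.orbitZPowersEquiv (oiPerm g) x), Nat.card_zmod]

/-- Key fact: `g^m` fixes `x` iff the orbit cardinality divides `m`. -/
lemma zpow_fix_iff [Fintype P] (g : P ≃o P) (x : P) (m : ℤ) :
    (g ^ m) x = x ↔ ((orbit g x).ncard : ℤ) ∣ m := by
  rw [oi_zpow_apply, ncard_orbit_eq]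
  exact MulAction.zpow_smul_eq_iff_minimalPeriod_dvd (a := oiPerm g) (b := x) (n := m)

/-- Orbits of automorphisms of finite posets are antichains. -/
lemma orbit_antichain [Finite P] (g : P ≃o P) (x0 : P) :
    ∀ a ∈ orbit g x0, ∀ b ∈ orbit g x0, a ≤ b → a = b := by
  rintro a ⟨i, rfl⟩ b ⟨j, rfl⟩ hab
  set a := (g ^ i) x0 with ha
  by_contra hne
  have hb : (g ^ j) x0 = (g ^ (j - i)) a := by
    rw [ha, show ((g ^ (j - i)) ((g ^ i) x0) = (g ^ (j - i) * g ^ i) x0) from rfl,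
      ← zpow_add, sub_add_cancel]
  set c := j - i with hc
  have hlt : a < (g ^ c) a := lt_of_le_of_ne (hb ▸ hab) (fun h => hne (by rw [hb, ← h]))
  have hmono : StrictMono (fun t : ℕ => (g ^ (c * t)) a) := by
    apply strictMono_nat_of_lt_succ
    intro t
    have h1 : (g ^ (c * t)) a < (g ^ (c * t)) ((g ^ c) a) :=
      (g ^ (c * t)).strictMono hlt
    calc (g ^ (c * t)) a < (g ^ (c * t)) ((g ^ c) a) := h1
      _ = (g ^ (c * (t + 1))) a := by
          rw [show ((g ^ (c * t)) ((g ^ c) a) = (g ^ (c * t) * g ^ c) a) from rfl,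
            ← zpow_add, mul_add, mul_one]
  obtain ⟨s, t, hst, he⟩ := Finite.exists_ne_map_eq_of_infinite fun t : ℕ => (g ^ (c * t)) a
  exact hst (hmono.injective he)

/-- Piecewise automorphism: apply `k` on a suitable invariant subset `C` of an antichain `O`
outside of which `k` is the identity, and the identity elsewhere. -/
lemma exists_piece (k : P ≃o P) (C O : Set P)
    (hCO : C ⊆ O) (hanti : ∀ a ∈ O, ∀ b ∈ O, a ≤ b → a = b)
    (hfix : ∀ w, w ∉ O → k w = w) (hinv : ∀ x, x ∈ C ↔ k x ∈ C) :
    ∃ φ : P ≃o P, (∀ x ∈ C, φ x = k x) ∧ (∀ x ∉ C, φ x = x) := by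
  classical
  have hinv' : ∀ x, x ∈ C ↔ k.symm x ∈ C := by
    intro x
    rw [hinv (k.symm x), k.apply_symm_apply]
  have hfix' : ∀ w, w ∉ O → k.symm w = w := by
    intro w hw
    conv_lhs => rw [← hfix w hw]
    exact k.symm_apply_apply w
  have hmono : ∀ (k' : P ≃o P), (∀ w, w ∉ O → k' w = w) → (∀ x, x ∈ C ↔ k' x ∈ C) →
      ∀ a b : P, a ≤ b → (if a ∈ C then k' a else a) ≤ (if b ∈ C then k' b else b) := by
    intro k' hfix' hinv' a b hab
    by_cases ha : a ∈ C <;> by_cases hb : b ∈ C <;> simp only [ha, hb, if_pos, if_neg,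
      if_true, if_false]
    · exact k'.le_iff_le.mpr hab
    · by_cases hbO : b ∈ O
      · exact absurd (hanti a (hCO ha) b hbO hab) (fun h => hb (h ▸ ha))
      · rw [← hfix' b hbO]; exact k'.le_iff_le.mpr hab
    · by_cases haO : a ∈ O
      · exact absurd (hanti a haO b (hCO hb) hab) (fun h => ha (h ▸ hb))
      · rw [← hfix' a haO]; exact k'.le_iff_le.mpr hab
    · exact hab
  set f : P → P := fun x => if x ∈ C then k x else x with hf
  set f' : P → P := fun x => if x ∈ C then k.symm x else x with hf'
  have hleft : ∀ x, f' (f x) = x := by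
    intro x
    by_cases hx : x ∈ C
    · have : k x ∈ C := (hinv x).mp hx
      simp only [hf, hf', if_pos hx, if_pos this, k.symm_apply_apply]
    · simp only [hf, hf', if_neg hx]
  have hright : ∀ x, f (f' x) = x := by
    intro x
    by_cases hx : x ∈ C
    · have : k.symm x ∈ C := (hinv' x).mp hx
      simp only [hf, hf', if_pos hx, if_pos this, k.apply_symm_apply]
    · simp only [hf, hf', if_neg hx]
  refine ⟨⟨⟨f, f', hleft, hright⟩, ?_⟩, fun x hx => if_pos hx, fun x hx => if_neg hx⟩
  intro a b
  constructor
  · intro h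
    have h2 : f' (f a) ≤ f' (f b) := hmono k.symm hfix' hinv' (f a) (f b) h
    rwa [hleft, hleft] at h2
  · exact hmono k hfix hinv a b

/-- Transposing two elements of an antichain with identical comparability patterns. -/
lemma exists_swapOI (O : Set P) (hanti : ∀ a ∈ O, ∀ b ∈ O, a ≤ b → a = b)
    (a b : P) (ha : a ∈ O) (hb : b ∈ O) (hne : a ≠ b)
    (hcmp : ∀ w, w ∉ O → ((a ≤ w ↔ b ≤ w) ∧ (w ≤ a ↔ w ≤ b))) :
    ∃ τ : P ≃o P, τ a = b ∧ τ b = a := by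
  classical
  have hmono : ∀ x y : P, x ≤ y → Equiv.swap a b x ≤ Equiv.swap a b y := by
    intro x y hxy
    rcases eq_or_ne x y with rfl | hxyne
    · exact le_refl _
    by_cases hxa : x = a
    · rw [hxa] at hxy ⊢
      have hya : y ≠ a := fun h => hxyne (hxa.trans h.symm)
      by_cases hyb : y = b
      · rw [hyb] at hxy
        exact absurd (hanti a ha b hb hxy) hne
      · rw [Equiv.swap_apply_left, Equiv.swap_apply_of_ne_of_ne hya hyb]
        by_cases hyO : y ∈ O
        · exact absurd (hanti a ha y hyO hxy) (fun h => hya h.symm)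
        · exact ((hcmp y hyO).1).mp hxy
    · by_cases hxb : x = b
      · rw [hxb] at hxy ⊢
        have hyb : y ≠ b := fun h => hxyne (hxb.trans h.symm)
        by_cases hya : y = a
        · rw [hya] at hxy
          exact absurd (hanti b hb a ha hxy) (Ne.symm hne)
        · rw [Equiv.swap_apply_right, Equiv.swap_apply_of_ne_of_ne hya hyb]
          by_cases hyO : y ∈ O
          · exact absurd (hanti b hb y hyO hxy) (fun h => hyb h.symm)
          · exact ((hcmp y hyO).1).mpr hxy
      · rw [Equiv.swap_apply_of_ne_of_ne hxa hxb]
        by_cases hya : y = a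
        · rw [hya] at hxy ⊢
          rw [Equiv.swap_apply_left]
          by_cases hxO : x ∈ O
          · exact absurd (hanti x hxO a ha hxy) hxa
          · exact ((hcmp x hxO).2).mp hxy
        · by_cases hyb : y = b
          · rw [hyb] at hxy ⊢
            rw [Equiv.swap_apply_right]
            by_cases hxO : x ∈ O
            · exact absurd (hanti x hxO b hb hxy) hxb
            · exact ((hcmp x hxO).2).mpr hxy
          · rw [Equiv.swap_apply_of_ne_of_ne hya hyb]
            exact hxy
  refine ⟨⟨Equiv.swap a b, ?_⟩, Equiv.swap_apply_left a b, Equiv.swap_apply_right a b⟩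
  intro x y
  constructor
  · intro h
    have h2 := hmono _ _ h
    rwa [Equiv.swap_apply_self, Equiv.swap_apply_self] at h2
  · exact hmono x y

end Aux

/-- If `p^r` exactly divides `n`, any divisor of `n` not divisible by `p^r`
divides `n / p`. -/
lemma dvd_div_p {p r n d : ℕ} (hp : p.Prime) (hr : 1 ≤ r) (hdvd : p ^ r ∣ n)
    (hndvd : ¬ p ^ (r + 1) ∣ n) (hn : n ≠ 0) (hd : d ∣ n) (h : ¬ p ^ r ∣ d) :
    d ∣ n / p := by
  obtain ⟨m, hm⟩ := hdvd
  have hpm : ¬ p ∣ m := by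
    intro hc
    obtain ⟨t, rfl⟩ := hc
    exact hndvd ⟨t, by rw [hm, pow_succ]; ring⟩
  have hd0 : d ≠ 0 := fun h0 => hn (Nat.eq_zero_of_zero_dvd (h0 ▸ hd))
  obtain ⟨s, t, hpt, hdst⟩ := Nat.exists_eq_pow_mul_and_not_dvd hd0 p hp.ne_one
  have hs : s < r := by
    by_contra hsr
    exact h (hdst ▸ Dvd.dvd.mul_right (pow_dvd_pow p (by omega)) t)
  have ht : t ∣ m := by
    have htd : t ∣ d := ⟨p ^ s, by rw [hdst]; ring⟩
    have htn : t ∣ p ^ r * m := hm ▸ htd.trans hd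
    have hcop : Nat.Coprime t (p ^ r) :=
      Nat.Coprime.pow_right r ((hp.coprime_iff_not_dvd.mpr hpt).symm)
    exact hcop.dvd_of_dvd_mul_left htn
  have hppow : p * p ^ (r - 1) = p ^ r := by
    rw [← pow_succ']
    congr 1
    omega
  have hnp : n / p = p ^ (r - 1) * m := by
    have hnn : n = p * (p ^ (r - 1) * m) := by rw [hm, ← mul_assoc, hppow]
    rw [hnn, Nat.mul_div_cancel_left _ hp.pos]
  rw [hnp, hdst]
  exact mul_dvd_mul (pow_dvd_pow p (by omega)) ht

/-- Let `n ≥ 1` and let `p^r ≠ 2` be a prime power exactly dividing `n`. If `P` is a finite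
poset with `Aut(P)` cyclic of order `n` generated by `g`, then `⟨g⟩` has at least two
distinct orbits whose cardinality is divisible by `p^r`. -/
theorem two_orbits_of_exact_prime_power (n : ℕ) (hn : 1 ≤ n)
    (p r : ℕ) (hp : p.Prime) (hr : 1 ≤ r) (hne : p ^ r ≠ 2)
    (hdvd : p ^ r ∣ n) (hndvd : ¬ p ^ (r + 1) ∣ n)
    (P : Type) [PartialOrder P] [Fintype P] (g : P ≃o P)
    (hord : orderOf g = n) (hgen : ∀ φ : P ≃o P, ∃ m : ℤ, g ^ m = φ) :
    ∃ x y : P, orbit g x ≠ orbit g y ∧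
      p ^ r ∣ (orbit g x).ncard ∧ p ^ r ∣ (orbit g y).ncard := by
  classical
  by_contra hcon
  push_neg at hcon
  have hsame : ∀ x y : P, p ^ r ∣ (orbit g x).ncard → p ^ r ∣ (orbit g y).ncard →
      orbit g x = orbit g y := by
    intro x y hx hy
    by_contra hneq
    exact hcon x y hneq hx hy
  have hp2 : 2 ≤ p := hp.two_le
  have hn0 : n ≠ 0 := by omega
  have hpn : p ∣ n := dvd_trans (dvd_pow_self p (by omega : r ≠ 0)) hdvd
  have hq : p * (n / p) = n := Nat.mul_div_cancel' hpn
  set q : ℕ := n / p with hqdef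
  have hq1 : 1 ≤ q := by
    rcases Nat.eq_zero_or_pos q with h0 | h
    · rw [h0] at hq; omega
    · exact h
  have hL2 : ¬ p ^ r ∣ q := by
    intro hc
    obtain ⟨t, hqt⟩ := hc
    exact hndvd ⟨t, by rw [← hq, hqt, pow_succ]; ring⟩
  have hSdvd : ∀ x : P, (orbit g x).ncard ∣ n := by
    intro x
    have h1 : (g ^ (n : ℤ)) x = x := by
      rw [zpow_natCast, ← hord, pow_orderOf_eq_one]; rfl
    exact_mod_cast (zpow_fix_iff g x n).mp h1
  have hL1 : ∀ x : P, ¬ p ^ r ∣ (orbit g x).ncard → (g ^ (q : ℤ)) x = x := by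
    intro x h
    exact (zpow_fix_iff g x q).mpr (Int.natCast_dvd_natCast.mpr
      (dvd_div_p hp hr hdvd hndvd hn0 (hSdvd x) h))
  have hex : ∃ x0 : P, p ^ r ∣ (orbit g x0).ncard := by
    by_contra hno
    push_neg at hno
    have hone : g ^ q = 1 := by
      apply DFunLike.ext
      intro x
      have := hL1 x (hno x)
      rwa [zpow_natCast] at this
    have hdq : n ∣ q := hord ▸ orderOf_dvd_of_pow_eq_one hone
    have h1 := Nat.le_of_dvd (by omega) hdq
    have hlt : q < n := Nat.div_lt_self (by omega) (by omega)
    omega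
  obtain ⟨x0, hx0⟩ := hex
  set O : Set P := orbit g x0 with hO
  set k : P ≃o P := g ^ (q : ℤ) with hk
  have hSconst : ∀ y ∈ O, (orbit g y).ncard = (orbit g x0).ncard := fun y hy => by
    rw [orbit_eq_of_mem g hy]
  have hkfix : ∀ w, w ∉ O → k w = w := by
    intro w hw
    by_cases hdw : p ^ r ∣ (orbit g w).ncard
    · have hmem : w ∈ orbit g x0 := by
        rw [← hsame w x0 hdw hx0]; exact mem_orbit_self g w
      exact absurd hmem hw
    · exact hL1 w hdw
  have hanti := orbit_antichain g x0
  have hkx0 : k x0 ≠ x0 := by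
    intro hc
    have := Int.natCast_dvd_natCast.mp ((zpow_fix_iff g x0 q).mp hc)
    exact hL2 (dvd_trans hx0 this)
  by_cases hcase : ∃ y0 ∈ O, y0 ∉ orbit k x0
  · -- Case 1: the k-cycle of x0 is a proper subset of the orbit of x0
    obtain ⟨y0, hy0O, hy0C⟩ := hcase
    set C : Set P := orbit k x0 with hC
    have hCO : C ⊆ O := by
      rintro y ⟨i, rfl⟩
      exact ⟨q * i, by rw [zpow_mul, ← hk]⟩
    have hinv : ∀ x, x ∈ C ↔ k x ∈ C := by
      intro x
      constructor
      · rintro ⟨i, rfl⟩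
        exact ⟨1 + i, by rw [zpow_add, zpow_one, oi_mul_apply]⟩
      · rintro ⟨i, hi⟩
        refine ⟨i - 1, ?_⟩
        have h2 : k * k ^ (i - 1) = k ^ i := by
          calc k * k ^ (i - 1) = k ^ (1 : ℤ) * k ^ (i - 1) := by rw [zpow_one]
            _ = k ^ (1 + (i - 1)) := (zpow_add k 1 (i - 1)).symm
            _ = k ^ i := by congr 1; omega
        apply EquivLike.injective k
        calc k ((k ^ (i - 1)) x0) = (k * k ^ (i - 1)) x0 := rfl
          _ = (k ^ i) x0 := by rw [h2]
          _ = k x := hi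
    obtain ⟨φ, hφC, hφn⟩ := exists_piece k C O hCO hanti hkfix hinv
    obtain ⟨a, ha⟩ := hgen φ
    have hx0C : x0 ∈ C := mem_orbit_self k x0
    have e1 : (g ^ a) x0 = k x0 := by rw [ha]; exact hφC x0 hx0C
    have d1 : ((orbit g x0).ncard : ℤ) ∣ a - q := by
      apply (zpow_fix_iff g x0 (a - q)).mp
      have h3 : (g ^ (a - (q : ℤ))) x0 = (g ^ (-(q : ℤ)) * g ^ a) x0 := by
        rw [sub_eq_neg_add, zpow_add]
      rw [h3, oi_mul_apply, e1, hk, ← oi_mul_apply, ← zpow_add, neg_add_cancel, zpow_zero]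
      rfl
    have e2 : (g ^ a) y0 = y0 := by rw [ha]; exact hφn y0 hy0C
    have d2 : ((orbit g x0).ncard : ℤ) ∣ a := by
      have h4 := (zpow_fix_iff g y0 a).mp e2
      rwa [hSconst y0 hy0O] at h4
    have d3 : ((orbit g x0).ncard : ℤ) ∣ (q : ℤ) := by
      have := dvd_sub d2 d1
      simpa using this
    exact hL2 (dvd_trans hx0 (Int.natCast_dvd_natCast.mp d3))
  · -- Case 2: the orbit of x0 equals the k-cycle of x0
    push_neg at hcase
    have hkp : k ^ (p : ℤ) = 1 := by
      rw [hk, ← zpow_mul]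
      have hqp : (q : ℤ) * p = (n : ℤ) := by exact_mod_cast (by rw [mul_comm]; exact hq)
      rw [hqp, zpow_natCast, ← hord, pow_orderOf_eq_one]
    have hbound : (orbit g x0).ncard ≤ p := by
      have hsub : O ⊆ ↑((Finset.range p).image fun i : ℕ => (k ^ (i : ℤ)) x0) := by
        intro y hy
        obtain ⟨m, rfl⟩ := hcase y hy
        have hs0 : 0 ≤ m % p := Int.emod_nonneg m (by exact_mod_cast (by omega : p ≠ 0))
        have hsp : m % p < p := Int.emod_lt_of_pos m (by exact_mod_cast hp.pos)
        have hksm : (k ^ m) x0 = (k ^ (m % p)) x0 := by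
          have h5 : k ^ m = k ^ ((p : ℤ) * (m / p) + m % p) := by
            rw [Int.mul_ediv_add_emod m p]
          rw [h5, zpow_add, zpow_mul, hkp, one_zpow, one_mul]
        simp only [Finset.coe_image, Set.mem_image, Finset.mem_coe, Finset.mem_range]
        refine ⟨(m % p).toNat, by omega, ?_⟩
        rw [Int.toNat_of_nonneg hs0, ← hksm]
      calc (orbit g x0).ncard ≤ _ := Set.ncard_le_ncard hsub (Finset.finite_toSet _)
        _ = _ := Set.ncard_coe_finset _
        _ ≤ p := le_trans Finset.card_image_le (by rw [Finset.card_range])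
    have hSpos : 0 < (orbit g x0).ncard :=
      (Set.ncard_pos (Set.toFinite _)).mpr ⟨x0, mem_orbit_self g x0⟩
    have hge : p ^ r ≤ (orbit g x0).ncard := Nat.le_of_dvd hSpos hx0
    have hr1 : r = 1 := by
      have h6 : p ^ r ≤ p ^ 1 := by simpa using le_trans hge hbound
      have h7 : r ≤ 1 := (Nat.pow_le_pow_iff_right (by omega : 1 < p)).mp h6
      omega
    have hpne2 : p ≠ 2 := by
      rw [hr1, pow_one] at hne
      exact hne
    have hbO : k x0 ∈ O := ⟨q, by rw [← hk]⟩
    have hcmp : ∀ w, w ∉ O → ((x0 ≤ w ↔ k x0 ≤ w) ∧ (w ≤ x0 ↔ w ≤ k x0)) := by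
      intro w hw
      constructor
      · conv_rhs => rw [← hkfix w hw]
        exact k.le_iff_le.symm
      · conv_rhs => rw [show w = k w from (hkfix w hw).symm]
        exact k.le_iff_le.symm
    obtain ⟨τ, hτ1, hτ2⟩ := exists_swapOI O hanti x0 (k x0)
      (mem_orbit_self g x0) hbO (Ne.symm hkx0) hcmp
    obtain ⟨c, hcτ⟩ := hgen τ
    have hcomm : (g ^ c) (k x0) = k ((g ^ c) x0) := by
      rw [hk, ← oi_mul_apply, ← oi_mul_apply, ← zpow_add, ← zpow_add, add_comm]
    rw [hcτ, hτ1, hτ2] at hcomm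
    have hk2 : (g ^ ((q : ℤ) + q)) x0 = x0 := by
      rw [zpow_add, ← hk, oi_mul_apply, ← hcomm]
    have hd : ((orbit g x0).ncard : ℤ) ∣ ((q : ℤ) + q) := (zpow_fix_iff g x0 _).mp hk2
    have hd2 : (orbit g x0).ncard ∣ 2 * q := by
      have : ((orbit g x0).ncard : ℤ) ∣ ((2 * q : ℕ) : ℤ) := by
        convert hd using 1; push_cast; ring
      exact_mod_cast this
    have hpd : p ∣ 2 * q :=
      dvd_trans (dvd_pow_self p (by omega : r ≠ 0)) (dvd_trans hx0 hd2)
    rcases (Nat.Prime.dvd_mul hp).mp hpd with h2 | hq2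
    · have := Nat.le_of_dvd (by omega) h2
      omega
    · exact hL2 (by rw [hr1, pow_one]; exact hq2)
end

section
/- Let p be 3, 5 or 7. Let P be a finite poset on which the cyclic group ℤ/pℤ acts by automorphisms with exactly two orbits, both of cardinality p. Then there exists an automorphism φ of P which is not induced by the action (i.e. φ is not in the image of the homomorphism ℤ/pℤ → Aut(P)) and such that each of the two orbits of the action is φ-invariant. -/
/-- The orbit of `x` under an action of `ℤ/pℤ` given as a homomorphism into `Aut(P)`. -/
def aorbit {G P : Type} [Group G] [PartialOrder P] (ρ : G →* (P ≃o P)) (x : P) : Set P :=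
  {y | ∃ m : G, (ρ m) x = y}

open Multiplicative

lemma orb_comp {P : Type} [PartialOrder P] {p : ℕ} (ρ : Multiplicative (ZMod p) →* (P ≃o P))
    (a b : Multiplicative (ZMod p)) (z : P) : (ρ a) ((ρ b) z) = (ρ (a * b)) z := by
  rw [map_mul]; rfl

lemma aorbit_eq_of_mem {P : Type} [PartialOrder P] {p : ℕ}
    (ρ : Multiplicative (ZMod p) →* (P ≃o P)) {z w : P} (h : w ∈ aorbit ρ z) :
    aorbit ρ w = aorbit ρ z := by
  obtain ⟨m, rfl⟩ := h
  ext c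
  constructor
  · rintro ⟨n, rfl⟩; exact ⟨n * m, (orb_comp ρ n m z).symm⟩
  · rintro ⟨n, rfl⟩
    exact ⟨n * m⁻¹, by rw [orb_comp, mul_assoc, inv_mul_cancel, mul_one]⟩

lemma rho_fix {P : Type} [PartialOrder P] {p : ℕ} (hp : p ≠ 0)
    (ρ : Multiplicative (ZMod p) →* (P ≃o P)) (z : P) (m : Multiplicative (ZMod p))
    (h : z ≤ (ρ m) z) : (ρ m) z = z := by
  have hmp : m ^ p = 1 := by
    have : toAdd (m ^ p) = 0 := by
      rw [toAdd_pow]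
      simp [nsmul_eq_mul, ZMod.natCast_self]
    calc m ^ p = ofAdd (toAdd (m ^ p)) := (ofAdd_toAdd _).symm
    _ = ofAdd 0 := by rw [this]
    _ = 1 := rfl
  have key : ∀ k : ℕ, z ≤ (ρ (m ^ k)) z := by
    intro k
    induction k with
    | zero => simp
    | succ n ih =>
      have h2 : (ρ (m ^ n)) z ≤ (ρ (m ^ n)) ((ρ m) z) := (ρ (m ^ n)).monotone h
      rw [orb_comp, ← pow_succ] at h2
      exact ih.trans h2
  have h2 : (ρ m) z ≤ z := by
    have h3 := (ρ m).monotone (key (p - 1))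
    rw [orb_comp, ← pow_succ'] at h3
    rwa [Nat.sub_add_cancel (Nat.one_le_iff_ne_zero.mpr hp), hmp, map_one] at h3
  exact le_antisymm h2 h

lemma not_lt_rho {P : Type} [PartialOrder P] {p : ℕ} (hp : p ≠ 0)
    (ρ : Multiplicative (ZMod p) →* (P ≃o P)) (z : P) (m : Multiplicative (ZMod p)) :
    ¬ z < (ρ m) z := fun h => h.ne' (rho_fix hp ρ z m h.le)

def affEquiv {p : ℕ} (a a' t : ZMod p) (h : a * a' = 1) : ZMod p ≃ ZMod p where
  toFun d := a * d + t
  invFun d := a' * (d - t)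
  left_inv d := by
    show a' * (a * d + t - t) = d
    rw [add_sub_cancel_right, ← mul_assoc, mul_comm a' a, h, one_mul]
  right_inv d := by
    show a * (a' * (d - t)) + t = d
    rw [← mul_assoc, h, one_mul, sub_add_cancel]
@[simp] lemma affEquiv_apply {p : ℕ} (a a' t : ZMod p) (h : a * a' = 1) (d : ZMod p) :
    affEquiv a a' t h d = a * d + t := rfl

lemma inj_of_ncard_range {α β : Type} [Fintype α] [Fintype β] (f : α → β)
    (h : (Set.range f).ncard = Fintype.card α) : Function.Injective f := by
  classical
  rw [Set.ncard_eq_toFinset_card', ← Finset.card_univ] at h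
  have h2 : (Set.range f).toFinset = Finset.univ.image f := by ext b; simp
  rw [h2] at h
  have := Finset.card_image_iff.mp h
  intro a b hab
  exact this (Finset.mem_coe.mpr (Finset.mem_univ a)) (Finset.mem_coe.mpr (Finset.mem_univ b)) hab

lemma aux2 {p : ℕ} (hp : p.Prime)
    (hcomb : ∀ f : ZMod p → Bool, ∃ a t : ZMod p,
      (∃ b, a * b = 1) ∧ ¬(a = 1 ∧ t = 0) ∧ ∀ d, f (a * d + t) = f d)
    (P : Type) [PartialOrder P] [Fintype P]
    (ρ : Multiplicative (ZMod p) →* (P ≃o P))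
    (x y : P) (hxy : aorbit ρ x ≠ aorbit ρ y)
    (hxc : (aorbit ρ x).ncard = p) (hyc : (aorbit ρ y).ncard = p)
    (hall : ∀ z : P, aorbit ρ z = aorbit ρ x ∨ aorbit ρ z = aorbit ρ y)
    (hdir : ∀ m n : Multiplicative (ZMod p), ¬ (ρ m) y < (ρ n) x) :
    ∃ φ : P ≃o P, (∀ m : Multiplicative (ZMod p), ρ m ≠ φ) ∧
      ∀ z : P, φ '' aorbit ρ z = aorbit ρ z := by
  haveI : Fact p.Prime := ⟨hp⟩
  have hp0 : p ≠ 0 := hp.ne_zero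
  set u : ZMod p → P := fun i => (ρ (ofAdd i)) x with hu_def
  set v : ZMod p → P := fun j => (ρ (ofAdd j)) y with hv_def
  -- ranges
  have hru : Set.range u = aorbit ρ x := by
    ext w
    constructor
    · rintro ⟨i, rfl⟩; exact ⟨ofAdd i, rfl⟩
    · rintro ⟨m, rfl⟩; exact ⟨toAdd m, by simp [hu_def]⟩
  have hrv : Set.range v = aorbit ρ y := by
    ext w
    constructor
    · rintro ⟨j, rfl⟩; exact ⟨ofAdd j, rfl⟩
    · rintro ⟨m, rfl⟩; exact ⟨toAdd m, by simp [hv_def]⟩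
  have hcardZ : Fintype.card (ZMod p) = p := ZMod.card p
  have hu_inj : Function.Injective u :=
    inj_of_ncard_range u (by rw [hru, hxc, hcardZ])
  have hv_inj : Function.Injective v :=
    inj_of_ncard_range v (by rw [hrv, hyc, hcardZ])
  -- membership basics
  have humem : ∀ i, u i ∈ aorbit ρ x := fun i => hru ▸ Set.mem_range_self i
  have hvmem : ∀ j, v j ∈ aorbit ρ y := fun j => hrv ▸ Set.mem_range_self j
  -- cross-orbit distinctness
  have huv : ∀ i j, u i ≠ v j := by
    intro i j h
    exact hxy ((aorbit_eq_of_mem ρ (humem i)).symm.trans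
      (h ▸ aorbit_eq_of_mem ρ (hvmem j)))
  -- cover
  have hcover : ∀ z : P, (∃ i, u i = z) ∨ (∃ j, v j = z) := by
    intro z
    have hz : z ∈ aorbit ρ z := ⟨1, by simp⟩
    rcases hall z with h | h
    · exact Or.inl (Set.mem_range.mp (hru ▸ (h ▸ hz) : z ∈ Set.range u))
    · exact Or.inr (Set.mem_range.mp (hrv ▸ (h ▸ hz) : z ∈ Set.range v))
  -- translation
  have hu_tr : ∀ (m : Multiplicative (ZMod p)) (i : ZMod p),
      (ρ m) (u i) = u (toAdd m + i) := by
    intro m i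
    show (ρ m) ((ρ (ofAdd i)) x) = (ρ (ofAdd (toAdd m + i))) x
    rw [orb_comp]
    congr 1
  have hv_tr : ∀ (m : Multiplicative (ZMod p)) (j : ZMod p),
      (ρ m) (v j) = v (toAdd m + j) := by
    intro m j
    show (ρ m) ((ρ (ofAdd j)) y) = (ρ (ofAdd (toAdd m + j))) y
    rw [orb_comp]
    congr 1
  have hu0 : u 0 = x := by rw [hu_def]; simp
  have hv0 : v 0 = y := by rw [hv_def]; simp
  -- antichain within orbits
  have hu_le : ∀ i i', u i ≤ u i' ↔ i = i' := by
    intro i i'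
    constructor
    · intro h
      have he : (ρ (ofAdd (i' - i))) (u i) = u i' := by
        rw [hu_tr]; congr 1; simp [sub_add_cancel]
      have := rho_fix hp0 ρ (u i) (ofAdd (i' - i)) (by rw [he]; exact h)
      rw [he] at this
      exact (hu_inj this).symm
    · rintro rfl; exact le_refl _
  have hv_le : ∀ j j', v j ≤ v j' ↔ j = j' := by
    intro j j'
    constructor
    · intro h
      have he : (ρ (ofAdd (j' - j))) (v j) = v j' := by
        rw [hv_tr]; congr 1; simp [sub_add_cancel]
      have := rho_fix hp0 ρ (v j) (ofAdd (j' - j)) (by rw [he]; exact h)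
      rw [he] at this
      exact (hv_inj this).symm
    · rintro rfl; exact le_refl _
  -- no relation from v-side to u-side
  have hvu : ∀ j i, ¬ v j ≤ u i := by
    intro j i h
    rcases h.lt_or_eq with h | h
    · exact hdir (ofAdd j) (ofAdd i) h
    · exact huv i j h.symm
  -- the comparability set
  classical
  set S : ZMod p → Bool := fun d => decide (x < v d) with hS_def
  have hS : ∀ i j, u i ≤ v j ↔ S (j - i) = true := by
    intro i j
    rw [hS_def]
    simp only [decide_eq_true_iff]
    constructor
    · intro h
      have h' : u i < v j := h.lt_of_ne (huv i j)
      have := (ρ (ofAdd (-i))).strictMono h'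
      rwa [hu_tr, hv_tr, toAdd_ofAdd, neg_add_cancel, hu0, neg_add_eq_sub] at this
    · intro h
      have := (ρ (ofAdd i)).strictMono (lt_of_lt_of_le h (le_refl _))
      rw [← hu0] at this
      rw [hu_tr, hv_tr, toAdd_ofAdd, add_zero, add_sub_cancel] at this
      exact this.le
  obtain ⟨a, t, ⟨a', ha'⟩, hne, hfix⟩ := hcomb S
  have hcancel : ∀ b c : ZMod p, a * b = a * c → b = c := by
    intro b c h
    have h2 : a' * (a * b) = a' * (a * c) := by rw [h]
    rwa [← mul_assoc, ← mul_assoc, mul_comm a' a, ha', one_mul, one_mul] at h2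
  -- the underlying equiv
  have hbij : Function.Bijective (Sum.elim u v) := by
    constructor
    · rintro (i | j) (i' | j') h
      · exact congrArg Sum.inl (hu_inj h)
      · exact absurd h (huv i j')
      · exact absurd h.symm (huv i' j)
      · exact congrArg Sum.inr (hv_inj h)
    · intro z
      rcases hcover z with ⟨i, hi⟩ | ⟨j, hj⟩
      · exact ⟨Sum.inl i, hi⟩
      · exact ⟨Sum.inr j, hj⟩
  set e : (ZMod p ⊕ ZMod p) ≃ P := Equiv.ofBijective _ hbij with he_def
  set σ : (ZMod p ⊕ ZMod p) ≃ (ZMod p ⊕ ZMod p) :=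
    Equiv.sumCongr (affEquiv a a' 0 ha') (affEquiv a a' t ha') with hσ_def
  set φe : P ≃ P := (e.symm.trans σ).trans e with hφe_def
  have hsym_l : ∀ i, e.symm (u i) = Sum.inl i := by
    intro i; rw [Equiv.symm_apply_eq]; rfl
  have hsym_r : ∀ j, e.symm (v j) = Sum.inr j := by
    intro j; rw [Equiv.symm_apply_eq]; rfl
  have hφu : ∀ i, φe (u i) = u (a * i) := by
    intro i
    show e (σ (e.symm (u i))) = u (a * i)
    rw [hsym_l]
    show e (Sum.inl (a * i + 0)) = u (a * i)
    rw [add_zero]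
    rfl
  have hφv : ∀ j, φe (v j) = v (a * j + t) := by
    intro j
    show e (σ (e.symm (v j))) = v (a * j + t)
    rw [hsym_r]
    rfl
  -- order-compatibility
  have hord : ∀ z w : P, φe z ≤ φe w ↔ z ≤ w := by
    intro z w
    rcases hcover z with ⟨i, rfl⟩ | ⟨j, rfl⟩ <;> rcases hcover w with ⟨i', rfl⟩ | ⟨j', rfl⟩
    · rw [hφu, hφu, hu_le, hu_le]
      exact ⟨fun h => hcancel _ _ h, fun h => by rw [h]⟩
    · rw [hφu, hφv, hS, hS]
      have harith : a * j' + t - a * i = a * (j' - i) + t := by ring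
      rw [harith, hfix]
    · exact iff_of_false (by rw [hφv, hφu]; exact hvu _ _) (hvu _ _)
    · rw [hφv, hφv, hv_le, hv_le]
      constructor
      · intro h
        exact hcancel _ _ (add_right_cancel h)
      · intro h; rw [h]
  refine ⟨⟨φe, @fun z w => hord z w⟩, ?_, ?_⟩
  · -- not induced
    intro m hm
    have hme : ∀ z, (ρ m) z = φe z := fun z => DFunLike.congr_fun hm z
    have hmu : u (toAdd m) = (ρ m) x := by
      rw [hu_def]; simp
    have h1 : (ρ m) x = x := by
      rw [hme x, ← hu0, hφu 0, mul_zero]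
    have hm1 : m = 1 := by
      have h2 : u (toAdd m) = u 0 := by rw [hmu, h1, hu0]
      have h3 := hu_inj h2
      rw [← ofAdd_toAdd m, h3]; rfl
    have ht0 : t = 0 := by
      refine hv_inj (?_ : v t = v 0)
      calc v t = v (a * 0 + t) := by rw [mul_zero, zero_add]
        _ = φe (v 0) := (hφv 0).symm
        _ = (ρ m) (v 0) := (hme _).symm
        _ = v 0 := by rw [hm1, map_one]; rfl
    have ha1 : a = 1 := by
      refine hu_inj (?_ : u a = u 1)
      calc u a = u (a * 1) := by rw [mul_one]
        _ = φe (u 1) := (hφu 1).symm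
        _ = (ρ m) (u 1) := (hme _).symm
        _ = u 1 := by rw [hm1, map_one]; rfl
    exact hne ⟨ha1, ht0⟩
  · -- invariance of orbits
    intro z
    have himu : φe '' Set.range u = Set.range u := by
      ext w
      constructor
      · rintro ⟨_, ⟨i, rfl⟩, rfl⟩
        exact ⟨a * i, (hφu i).symm⟩
      · rintro ⟨i, rfl⟩
        exact ⟨u (a' * i), ⟨a' * i, rfl⟩, by
          rw [hφu, ← mul_assoc, ha', one_mul]⟩
    have himv : φe '' Set.range v = Set.range v := by
      ext w
      constructor
      · rintro ⟨_, ⟨j, rfl⟩, rfl⟩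
        exact ⟨a * j + t, (hφv j).symm⟩
      · rintro ⟨j, rfl⟩
        exact ⟨v (a' * (j - t)), ⟨a' * (j - t), rfl⟩, by
          rw [hφv, ← mul_assoc, ha', one_mul, sub_add_cancel]⟩
    rcases hall z with h | h <;> rw [h]
    · rw [← hru]; exact himu
    · rw [← hrv]; exact himv

lemma comb3 : ∀ f : ZMod 3 → Bool, ∃ a t : ZMod 3,
    (∃ b, a * b = 1) ∧ ¬(a = 1 ∧ t = 0) ∧ ∀ d, f (a * d + t) = f d := by decide

set_option maxHeartbeats 2000000 in
set_option maxRecDepth 20000 in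
lemma comb5 : ∀ f : ZMod 5 → Bool, ∃ a t : ZMod 5,
    (∃ b, a * b = 1) ∧ ¬(a = 1 ∧ t = 0) ∧ ∀ d, f (a * d + t) = f d := by decide

set_option maxHeartbeats 4000000 in
set_option maxRecDepth 100000 in
lemma comb7 : ∀ f : ZMod 7 → Bool, ∃ a t : ZMod 7,
    (∃ b, a * b = 1) ∧ ¬(a = 1 ∧ t = 0) ∧ ∀ d, f (a * d + t) = f d := by decide

/-- Let `p ∈ {3,5,7}` and let `ℤ/pℤ` act by automorphisms on a finite poset `P` with
exactly two orbits, both of cardinality `p`. Then there is an automorphism `φ` of `P` not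
induced by the action such that every orbit of the action is `φ`-invariant. -/
theorem exists_extra_automorphism_two_orbits (p : ℕ) (hp : p = 3 ∨ p = 5 ∨ p = 7)
    (P : Type) [PartialOrder P] [Fintype P]
    (ρ : Multiplicative (ZMod p) →* (P ≃o P))
    (x y : P) (hxy : aorbit ρ x ≠ aorbit ρ y)
    (hx : (aorbit ρ x).ncard = p) (hy : (aorbit ρ y).ncard = p)
    (hall : ∀ z : P, aorbit ρ z = aorbit ρ x ∨ aorbit ρ z = aorbit ρ y) :
    ∃ φ : P ≃o P, (∀ m : Multiplicative (ZMod p), ρ m ≠ φ) ∧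
      ∀ z : P, φ '' aorbit ρ z = aorbit ρ z := by
  have hprime : p.Prime := by rcases hp with rfl | rfl | rfl <;> norm_num
  have hcomb : ∀ f : ZMod p → Bool, ∃ a t : ZMod p,
      (∃ b, a * b = 1) ∧ ¬(a = 1 ∧ t = 0) ∧ ∀ d, f (a * d + t) = f d := by
    rcases hp with rfl | rfl | rfl
    exacts [comb3, comb5, comb7]
  have hp0 : p ≠ 0 := hprime.ne_zero
  by_cases hd : ∀ m n : Multiplicative (ZMod p), ¬ (ρ m) y < (ρ n) x
  · exact aux2 hprime hcomb P ρ x y hxy hx hy hall hd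
  · push_neg at hd
    obtain ⟨m1, n1, h1⟩ := hd
    have hd2 : ∀ m n : Multiplicative (ZMod p), ¬ (ρ m) x < (ρ n) y := by
      intro m n h2
      have h3 := (ρ (n1 * m⁻¹)).strictMono h2
      rw [orb_comp, orb_comp, mul_assoc, inv_mul_cancel, mul_one] at h3
      have h4 : (ρ m1) y < (ρ (n1 * m⁻¹ * n)) y := h1.trans h3
      have h5 : (ρ (n1 * m⁻¹ * n * m1⁻¹)) ((ρ m1) y) = (ρ (n1 * m⁻¹ * n)) y := by
        rw [orb_comp, mul_assoc, inv_mul_cancel, mul_one]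
      rw [← h5] at h4
      exact not_lt_rho hp0 ρ _ _ h4
    exact aux2 hprime hcomb P ρ y x (Ne.symm hxy) hy hx (fun z => (hall z).symm) hd2
end

section
/- Let P be a finite poset on which the cyclic group ℤ/4ℤ acts by automorphisms with either exactly two orbits, both of cardinality 4, or exactly three orbits, two of cardinality 4 and one of cardinality 2. Then there exists an automorphism φ of P which is not induced by the action and such that each orbit of the action is φ-invariant. -/
set_option linter.unusedSectionVars false



namespace Z4aux

def c2 (k : ZMod 4) : ZMod 2 := k.val
def l4 (t : ZMod 2) : ZMod 4 := t.val

variable {P : Type} [PartialOrder P] [Fintype P] (ρ : Multiplicative (ZMod 4) →* (P ≃o P))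

def ap (k : ZMod 4) (z : P) : P := ρ (Multiplicative.ofAdd k) z

lemma ap_add (k l : ZMod 4) (z : P) : ap ρ k (ap ρ l z) = ap ρ (k + l) z := by
  show _ = (ρ (Multiplicative.ofAdd k * Multiplicative.ofAdd l)) z
  rw [map_mul]
  rfl

lemma ap_zero (z : P) : ap ρ 0 z = z := by
  show (ρ 1) z = z
  rw [map_one]
  rfl

lemma ap_le_ap (k : ZMod 4) {z w : P} : ap ρ k z ≤ ap ρ k w ↔ z ≤ w := by
  simp [ap]

lemma mem_aorbit {x z : P} : z ∈ aorbit ρ x ↔ ∃ k : ZMod 4, ap ρ k x = z := by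
  constructor
  · rintro ⟨m, hm⟩; exact ⟨Multiplicative.toAdd m, by simpa [ap] using hm⟩
  · rintro ⟨k, hk⟩; exact ⟨Multiplicative.ofAdd k, hk⟩

lemma self_mem_aorbit (x : P) : x ∈ aorbit ρ x := (mem_aorbit ρ).2 ⟨0, ap_zero ρ x⟩

lemma ap_mem_aorbit (k : ZMod 4) (x : P) : ap ρ k x ∈ aorbit ρ x := (mem_aorbit ρ).2 ⟨k, rfl⟩

lemma aorbit_ap (k : ZMod 4) (x : P) : aorbit ρ (ap ρ k x) = aorbit ρ x := by
  ext w
  simp only [mem_aorbit]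
  constructor
  · rintro ⟨l, hl⟩; exact ⟨l + k, by rw [← hl, ap_add]⟩
  · rintro ⟨l, hl⟩; exact ⟨l - k, by rw [ap_add, sub_add_cancel, hl]⟩

lemma aorbit_eq_of_mem {x z : P} (h : z ∈ aorbit ρ x) : aorbit ρ z = aorbit ρ x := by
  obtain ⟨k, hk⟩ := (mem_aorbit ρ).1 h
  rw [← hk, aorbit_ap]

lemma antichain {z : P} {k : ZMod 4} (h : z ≤ ap ρ k z) : ap ρ k z = z := by
  have h2 : ap ρ k z ≤ ap ρ (k + k) z := by rw [← ap_add]; exact (ap_le_ap ρ k).2 h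
  have h3 : ap ρ (k + k) z ≤ ap ρ (k + (k + k)) z := by
    have t := (ap_le_ap ρ k).2 h2; rwa [ap_add, ap_add] at t
  have h4 : ap ρ (k + (k + k)) z ≤ ap ρ (k + (k + (k + k))) z := by
    have t := (ap_le_ap ρ k).2 h3; rwa [ap_add, ap_add] at t
  have hz : ∀ k : ZMod 4, k + (k + (k + k)) = 0 := by decide
  have h5 : ap ρ (k + (k + (k + k))) z = z := by rw [hz, ap_zero]
  exact le_antisymm (h2.trans (h3.trans (h4.trans h5.le))) h

lemma le_ap_iff_fix {z : P} {k : ZMod 4} : z ≤ ap ρ k z ↔ ap ρ k z = z :=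
  ⟨antichain ρ, fun h => h.ge⟩

lemma fix_neg {z : P} {k : ZMod 4} (h : ap ρ k z = z) : ap ρ (-k) z = z := by
  have := congrArg (ap ρ (-k)) h
  rw [ap_add, neg_add_cancel, ap_zero] at this
  exact this.symm

lemma cross_asym {x y : P} (hxy : aorbit ρ x ≠ aorbit ρ y) {k l : ZMod 4}
    (h1 : x ≤ ap ρ k y) (h2 : y ≤ ap ρ l x) : False := by
  have h3 : ap ρ k y ≤ ap ρ (k + l) x := by rw [← ap_add]; exact (ap_le_ap ρ k).2 h2
  have h4 : ap ρ (k + l) x = x := antichain ρ (h1.trans h3)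
  have h5 : x = ap ρ k y := le_antisymm h1 (h3.trans h4.le)
  exact hxy (by rw [h5, aorbit_ap])

lemma trans_ap {x y z : P} {k l : ZMod 4} (h1 : x ≤ ap ρ k y) (h2 : y ≤ ap ρ l z) :
    x ≤ ap ρ (k + l) z := by
  rw [← ap_add]
  exact h1.trans ((ap_le_ap ρ k).2 h2)


lemma orbit_sub_two {x : P} (h2 : ap ρ 2 x = x) : aorbit ρ x ⊆ {x, ap ρ 1 x} := by
  intro w hw
  obtain ⟨k, hk⟩ := (mem_aorbit ρ).1 hw
  have hcase : k = 0 ∨ k = 1 ∨ k = 2 ∨ k = 3 := by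
    have : ∀ k : ZMod 4, k = 0 ∨ k = 1 ∨ k = 2 ∨ k = 3 := by decide
    exact this k
  rcases hcase with h | h | h | h
  · left; rw [← hk, h, ap_zero]
  · right; rw [← hk, h]; rfl
  · left; rw [← hk, h, h2]
  · right; rw [← hk, h]
    have : ap ρ 1 (ap ρ 2 x) = ap ρ 3 x := by
      rw [ap_add, show (1 + 2 : ZMod 4) = 3 from by decide]
    rw [h2] at this
    rw [this]
    exact rfl

lemma ncard_le_two {x : P} (h2 : ap ρ 2 x = x) : (aorbit ρ x).ncard ≤ 2 := by
  have h := Set.ncard_le_ncard (orbit_sub_two ρ h2) (Set.toFinite _)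
  calc (aorbit ρ x).ncard ≤ ({x, ap ρ 1 x} : Set P).ncard := h
    _ ≤ ({ap ρ 1 x} : Set P).ncard + 1 := Set.ncard_insert_le _ _
    _ = 2 := by rw [Set.ncard_singleton]

lemma stab4 {x : P} (hc : (aorbit ρ x).ncard = 4) {k : ZMod 4} (hk : ap ρ k x = x) :
    k = 0 := by
  by_contra hne
  have h2 : ap ρ 2 x = x := by
    have hcase : k = 1 ∨ k = 2 ∨ k = 3 := by
      have : ∀ k : ZMod 4, k ≠ 0 → (k = 1 ∨ k = 2 ∨ k = 3) := by decide
      exact this k hne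
    rcases hcase with h | h | h
    · subst h
      have : ap ρ 1 (ap ρ 1 x) = ap ρ 2 x := by
        rw [ap_add, show (1 + 1 : ZMod 4) = 2 from by decide]
      rw [hk, hk] at this; exact this.symm
    · exact h ▸ hk
    · subst h
      have : ap ρ 3 (ap ρ 3 x) = ap ρ 2 x := by
        rw [ap_add, show (3 + 3 : ZMod 4) = 2 from by decide]
      rw [hk, hk] at this; exact this.symm
  have := ncard_le_two ρ h2
  omega

lemma stab2 {u : P} (hc : (aorbit ρ u).ncard = 2) : ap ρ 2 u = u := by
  by_contra h2
  have ha1 : ap ρ 1 u ≠ u := by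
    intro h
    have : ap ρ 1 (ap ρ 1 u) = ap ρ 2 u := by
      rw [ap_add, show (1 + 1 : ZMod 4) = 2 from by decide]
    rw [h, h] at this; exact h2 this.symm
  have ha12 : ap ρ 1 u ≠ ap ρ 2 u := by
    intro h
    have h' := congrArg (ap ρ 3) h
    rw [ap_add, ap_add, show (3 + 1 : ZMod 4) = 0 from by decide,
      show (3 + 2 : ZMod 4) = 1 from by decide, ap_zero] at h'
    exact ha1 h'.symm
  have hsub : ({u, ap ρ 1 u, ap ρ 2 u} : Set P) ⊆ aorbit ρ u := by
    intro w hw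
    rcases hw with h | h | h
    · exact h ▸ self_mem_aorbit ρ u
    · exact h ▸ ap_mem_aorbit ρ 1 u
    · exact h ▸ ap_mem_aorbit ρ 2 u
  have hcard : ({u, ap ρ 1 u, ap ρ 2 u} : Set P).ncard = 3 := by
    rw [Set.ncard_insert_of_notMem, Set.ncard_insert_of_notMem, Set.ncard_singleton]
    · simp only [Set.mem_singleton_iff]; exact ha12
    · simp only [Set.mem_insert_iff, Set.mem_singleton_iff]
      push_neg
      exact ⟨fun h => ha1 h.symm, fun h => h2 h.symm⟩
  have := Set.ncard_le_ncard hsub (Set.toFinite _)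
  omega


lemma zmod_arith1 : ∀ k : ZMod 4, k = l4 (c2 k) ∨ k = l4 (c2 k) + 2 := by decide
lemma zmod_arith2 : ∀ (k : ZMod 4) (t : ZMod 2), c2 (k + l4 t) = c2 k + t := by decide
lemma zmod_arith3 : ∀ (t : ZMod 2) (k : ZMod 4), c2 (l4 t + k) = t + c2 k := by decide
lemma zmod_arith4 : ∀ (e : ZMod 2) (k : ZMod 4), c2 (l4 e - k) = e - c2 k := by decide
lemma zmod_arith5 : ∀ (e : ZMod 2) (k : ZMod 4), c2 (-(l4 e) - k) = -e - c2 k := by decide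
lemma zmod_arith6 : ∀ (e : ZMod 2) (d k : ZMod 4), c2 (l4 e - d - k) = (e - c2 d) - c2 k := by
  decide
lemma zmod_arith7 : ∀ (e : ZMod 2) (d k : ZMod 4), c2 (d - l4 e - k) = (c2 d - e) - c2 k := by
  decide
lemma zmod_arith8 : ∀ (t s : ZMod 2) (m : ZMod 4), c2 m = t + s →
    m = l4 t + l4 s ∨ m = l4 t + (l4 s + 2) := by decide

set_option maxHeartbeats 1000000 in
lemma comb2 : ∀ (S S' : ZMod 4 → Bool), (∀ k l, S k = true → S' l = true → False) →
    ∃ d : ZMod 4, (∀ k, S k = S (d - k)) ∧ (∀ k, S' k = S' (-d - k)) := by decide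

set_option maxHeartbeats 10000000 in
set_option synthInstance.maxHeartbeats 1000000 in
set_option synthInstance.maxSize 2000 in
lemma comb : ∀ (S S' : ZMod 4 → Bool) (T T' V V' : ZMod 2 → Bool),
  (∀ k l, S k = true → S' l = true → False) →
  (∀ t s, T t = true → T' s = true → False) →
  (∀ t s, V t = true → V' s = true → False) →
  (∀ k t, S k = true → V t = true → T (c2 k + t) = true) →
  (∀ t s m, T t = true → V' s = true → c2 m = t + s → S m = true) →
  (∀ k t, S' k = true → T t = true → V (c2 k + t) = true) →
  (∀ t s m, V t = true → T' s = true → c2 m = t + s → S' m = true) →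
  (∀ t k, T' t = true → S k = true → V' (t + c2 k) = true) →
  (∀ t k, V' t = true → S' k = true → T' (t + c2 k) = true) →
  ∃ (d : ZMod 4) (e : ZMod 2),
    (∀ k, S k = S (d - k)) ∧ (∀ k, S' k = S' (-d - k)) ∧
    (∀ t, T t = T (e - t)) ∧ (∀ t, T' t = T' (-e - t)) ∧
    (∀ t, V t = V ((e - c2 d) - t)) ∧ (∀ t, V' t = V' ((c2 d - e) - t)) := by decide

/-- The "diagonal" reflection property within one orbit. -/
lemma Gdiag (w : P) (k : ZMod 4) : w ≤ ap ρ k w ↔ w ≤ ap ρ (0 - k) w := by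
  rw [zero_sub]
  constructor
  · intro h; exact (fix_neg ρ (antichain ρ h)).ge
  · intro h
    have h1 := fix_neg ρ (antichain ρ h)
    rw [neg_neg] at h1
    exact h1.ge

/-- Stability of relations `w ≤ _ u` under adding `2` when `ap ρ 2 u = u`. -/
lemma shiftR {u : P} (hu2 : ap ρ 2 u = u) (w : P) (m : ZMod 4) :
    w ≤ ap ρ (m + 2) u ↔ w ≤ ap ρ m u := by
  have : ap ρ (m + 2) u = ap ρ m u := by
    calc ap ρ (m + 2) u = ap ρ m (ap ρ 2 u) := (ap_add ρ m 2 u).symm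
      _ = ap ρ m u := by rw [hu2]
  rw [this]

/-- Stability of relations `u ≤ _ w` under adding `2` when `ap ρ 2 u = u`. -/
lemma shiftL {u : P} (hu2 : ap ρ 2 u = u) (w : P) (m : ZMod 4) :
    u ≤ ap ρ (m + 2) w ↔ u ≤ ap ρ m w := by
  have h4 : ∀ m' : ZMod 4, 2 + (m' + 2) = m' := by decide
  constructor
  · intro h
    have h1 := (ap_le_ap ρ 2).2 h
    rw [ap_add, h4, hu2] at h1
    exact h1
  · intro h
    have h1 := (ap_le_ap ρ 2).2 h
    rw [ap_add, hu2] at h1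
    have h5 : 2 + m = m + 2 := by ring
    rwa [h5] at h1

lemma reduceR {u : P} (hu2 : ap ρ 2 u = u) (w : P) (k : ZMod 4) :
    w ≤ ap ρ k u ↔ w ≤ ap ρ (l4 (c2 k)) u := by
  rcases zmod_arith1 k with h | h
  · rw [← h]
  · rw [show k = l4 (c2 k) + 2 from h] at *
    rw [shiftR ρ hu2]
    rw [show c2 (l4 (c2 k) + 2) = c2 k from by revert k; decide]

lemma reduceL {u : P} (hu2 : ap ρ 2 u = u) (w : P) (k : ZMod 4) :
    u ≤ ap ρ k w ↔ u ≤ ap ρ (l4 (c2 k)) w := by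
  rcases zmod_arith1 k with h | h
  · rw [← h]
  · rw [show k = l4 (c2 k) + 2 from h] at *
    rw [shiftL ρ hu2]
    rw [show c2 (l4 (c2 k) + 2) = c2 k from by revert k; decide]


lemma main_three (x y u : P) (hxy : aorbit ρ x ≠ aorbit ρ y) (hxu : aorbit ρ x ≠ aorbit ρ u)
    (hyu : aorbit ρ y ≠ aorbit ρ u) (hcx : (aorbit ρ x).ncard = 4)
    (hcu : (aorbit ρ u).ncard = 2)
    (hmem : ∀ z : P, z ∈ aorbit ρ x ∨ z ∈ aorbit ρ y ∨ z ∈ aorbit ρ u) :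
    ∃ φ : P ≃o P, (∀ m : Multiplicative (ZMod 4), ρ m ≠ φ) ∧
      ∀ z : P, φ '' aorbit ρ z = aorbit ρ z := by
  classical
  have hu2 : ap ρ 2 u = u := stab2 ρ hcu
  have hsx : ∀ k : ZMod 4, ap ρ k x = x → k = 0 := fun k hk => stab4 ρ hcx hk
  -- extract the reflection constants from the combinatorial lemma
  obtain ⟨d, e, hS, hS', hT, hT', hV, hV'⟩ :=
    comb (fun k => decide (x ≤ ap ρ k y)) (fun k => decide (y ≤ ap ρ k x))
      (fun t => decide (x ≤ ap ρ (l4 t) u)) (fun t => decide (u ≤ ap ρ (l4 t) x))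
      (fun t => decide (y ≤ ap ρ (l4 t) u)) (fun t => decide (u ≤ ap ρ (l4 t) y))
      (by
        intro k l hk hl
        rw [decide_eq_true_eq] at hk hl
        exact cross_asym ρ hxy hk hl)
      (by
        intro t s ht hs
        rw [decide_eq_true_eq] at ht hs
        exact cross_asym ρ hxu ht hs)
      (by
        intro t s ht hs
        rw [decide_eq_true_eq] at ht hs
        exact cross_asym ρ hyu ht hs)
      (by
        intro k t hk ht
        rw [decide_eq_true_eq] at hk ht ⊢
        have h1 := trans_ap ρ hk ht
        rw [← zmod_arith2 k t]
        exact (reduceR ρ hu2 x (k + l4 t)).1 h1)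
      (by
        intro t s m ht hs hm
        rw [decide_eq_true_eq] at ht hs ⊢
        rcases zmod_arith8 t s m hm with h | h
        · rw [h]; exact trans_ap ρ ht hs
        · rw [h]
          exact trans_ap ρ ht ((shiftL ρ hu2 y (l4 s)).2 hs))
      (by
        intro k t hk ht
        rw [decide_eq_true_eq] at hk ht ⊢
        have h1 := trans_ap ρ hk ht
        rw [← zmod_arith2 k t]
        exact (reduceR ρ hu2 y (k + l4 t)).1 h1)
      (by
        intro t s m ht hs hm
        rw [decide_eq_true_eq] at ht hs ⊢
        rcases zmod_arith8 t s m hm with h | h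
        · rw [h]; exact trans_ap ρ ht hs
        · rw [h]
          exact trans_ap ρ ht ((shiftL ρ hu2 x (l4 s)).2 hs))
      (by
        intro t k ht hk
        rw [decide_eq_true_eq] at ht hk ⊢
        have h1 := trans_ap ρ ht hk
        rw [← zmod_arith3 t k]
        exact (reduceL ρ hu2 y (l4 t + k)).1 h1)
      (by
        intro t k ht hk
        rw [decide_eq_true_eq] at ht hk ⊢
        have h1 := trans_ap ρ ht hk
        rw [← zmod_arith3 t k]
        exact (reduceL ρ hu2 x (l4 t + k)).1 h1)
  -- turn the boolean reflection facts into Prop facts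
  have hSp : ∀ k, x ≤ ap ρ k y ↔ x ≤ ap ρ (d - k) y := by
    intro k; have := hS k; rwa [decide_eq_decide] at this
  have hS'p : ∀ k, y ≤ ap ρ k x ↔ y ≤ ap ρ (-d - k) x := by
    intro k; have := hS' k; rwa [decide_eq_decide] at this
  have hTp : ∀ t, x ≤ ap ρ (l4 t) u ↔ x ≤ ap ρ (l4 (e - t)) u := by
    intro t; have := hT t; rwa [decide_eq_decide] at this
  have hT'p : ∀ t, u ≤ ap ρ (l4 t) x ↔ u ≤ ap ρ (l4 (-e - t)) x := by
    intro t; have := hT' t; rwa [decide_eq_decide] at this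
  have hVp : ∀ t, y ≤ ap ρ (l4 t) u ↔ y ≤ ap ρ (l4 ((e - c2 d) - t)) u := by
    intro t; have := hV t; rwa [decide_eq_decide] at this
  have hV'p : ∀ t, u ≤ ap ρ (l4 t) y ↔ u ≤ ap ρ (l4 ((c2 d - e) - t)) y := by
    intro t; have := hV' t; rwa [decide_eq_decide] at this
  -- the Good lemmas
  have Gxy : ∀ k, x ≤ ap ρ k y ↔ x ≤ ap ρ (d - k) y := hSp
  have Gyx : ∀ k, y ≤ ap ρ k x ↔ y ≤ ap ρ (-d - k) x := hS'p
  have Gxu : ∀ k, x ≤ ap ρ k u ↔ x ≤ ap ρ (l4 e - k) u := by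
    intro k
    rw [reduceR ρ hu2 x k, reduceR ρ hu2 x (l4 e - k), zmod_arith4 e k]
    exact hTp (c2 k)
  have Gux : ∀ k, u ≤ ap ρ k x ↔ u ≤ ap ρ (-(l4 e) - k) x := by
    intro k
    rw [reduceL ρ hu2 x k, reduceL ρ hu2 x (-(l4 e) - k), zmod_arith5 e k]
    exact hT'p (c2 k)
  have Gyu : ∀ k, y ≤ ap ρ k u ↔ y ≤ ap ρ (l4 e - d - k) u := by
    intro k
    rw [reduceR ρ hu2 y k, reduceR ρ hu2 y (l4 e - d - k), zmod_arith6 e d k]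
    exact hVp (c2 k)
  have Guy : ∀ k, u ≤ ap ρ k y ↔ u ≤ ap ρ (d - l4 e - k) y := by
    intro k
    rw [reduceL ρ hu2 y k, reduceL ρ hu2 y (d - l4 e - k), zmod_arith7 e d k]
    exact hV'p (c2 k)
  -- base point, label, constant functions
  set pz : P → P := fun z => if z ∈ aorbit ρ x then x else if z ∈ aorbit ρ y then y else u
    with hpz_def
  set cst : P → ZMod 4 := fun z => if z ∈ aorbit ρ x then 0 else
      if z ∈ aorbit ρ y then d else l4 e with hcst_def
  have hex : ∀ z, ∃ k, ap ρ k (pz z) = z := by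
    intro z
    rw [hpz_def]
    dsimp only
    split_ifs with h1 h2
    · exact (mem_aorbit ρ).1 h1
    · exact (mem_aorbit ρ).1 h2
    · rcases hmem z with h | h | h
      · exact absurd h h1
      · exact absurd h h2
      · exact (mem_aorbit ρ).1 h
  set μ : P → ZMod 4 := fun z => Classical.choose (hex z) with hμ_def
  have hμ : ∀ z, ap ρ (μ z) (pz z) = z := fun z => Classical.choose_spec (hex z)
  have hcases : ∀ z, (pz z = x ∧ cst z = 0 ∧ z ∈ aorbit ρ x) ∨
      (pz z = y ∧ cst z = d ∧ z ∈ aorbit ρ y) ∨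
      (pz z = u ∧ cst z = l4 e ∧ z ∈ aorbit ρ u) := by
    intro z
    rw [hpz_def, hcst_def]
    dsimp only
    split_ifs with h1 h2
    · exact Or.inl ⟨rfl, rfl, h1⟩
    · exact Or.inr (Or.inl ⟨rfl, rfl, h2⟩)
    · refine Or.inr (Or.inr ⟨rfl, rfl, ?_⟩)
      rcases hmem z with h | h | h
      · exact absurd h h1
      · exact absurd h h2
      · exact h
  have hGood : ∀ z w (k : ZMod 4),
      pz z ≤ ap ρ k (pz w) ↔ pz z ≤ ap ρ ((cst w - cst z) - k) (pz w) := by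
    intro z w k
    rcases hcases z with ⟨hp1, hc1, -⟩ | ⟨hp1, hc1, -⟩ | ⟨hp1, hc1, -⟩ <;>
      rcases hcases w with ⟨hp2, hc2, -⟩ | ⟨hp2, hc2, -⟩ | ⟨hp2, hc2, -⟩ <;>
      rw [hp1, hp2, hc1, hc2]
    · rw [show (0 : ZMod 4) - 0 - k = 0 - k by ring]; exact Gdiag ρ x k
    · rw [show d - 0 - k = d - k by ring]; exact Gxy k
    · rw [show l4 e - 0 - k = l4 e - k by ring]; exact Gxu k
    · rw [show (0 : ZMod 4) - d - k = -d - k by ring]; exact Gyx k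
    · rw [show d - d - k = 0 - k by ring]; exact Gdiag ρ y k
    · exact Gyu k
    · rw [show (0 : ZMod 4) - l4 e - k = -(l4 e) - k by ring]; exact Gux k
    · exact Guy k
    · rw [show l4 e - l4 e - k = 0 - k by ring]; exact Gdiag ρ u k
  -- the new automorphism as a function
  set f : P → P := fun z => ap ρ (cst z - μ z) (pz z) with hf_def
  have hkey : ∀ z w, f z ≤ f w ↔ z ≤ w := by
    intro z w
    have h1 : f z ≤ f w ↔ ap ρ (μ z - cst z) (f z) ≤ ap ρ (μ z - cst z) (f w) :=
      (ap_le_ap ρ _).symm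
    have h2 : ap ρ (μ z - cst z) (f z) = pz z := by
      show ap ρ (μ z - cst z) (ap ρ (cst z - μ z) (pz z)) = pz z
      rw [ap_add, show μ z - cst z + (cst z - μ z) = 0 by ring, ap_zero]
    have h3 : ap ρ (μ z - cst z) (f w) = ap ρ ((cst w - cst z) - (μ w - μ z)) (pz w) := by
      show ap ρ (μ z - cst z) (ap ρ (cst w - μ w) (pz w)) = _
      rw [ap_add, show μ z - cst z + (cst w - μ w) = (cst w - cst z) - (μ w - μ z) by ring]
    have h4 : z ≤ w ↔ ap ρ (0 - μ z) z ≤ ap ρ (0 - μ z) w := (ap_le_ap ρ _).symm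
    have h5 : ap ρ (0 - μ z) z = pz z := by
      nth_rewrite 2 [← hμ z]
      rw [ap_add, show 0 - μ z + μ z = 0 by ring, ap_zero]
    have h6 : ap ρ (0 - μ z) w = ap ρ (μ w - μ z) (pz w) := by
      nth_rewrite 1 [← hμ w]
      rw [ap_add, show 0 - μ z + μ w = μ w - μ z by ring]
    rw [h1, h2, h3, h4, h5, h6]
    exact (hGood z w (μ w - μ z)).symm
  have hinj : Function.Injective f := by
    intro z w h
    exact le_antisymm ((hkey z w).1 h.le) ((hkey w z).1 h.ge)
  have hbij : Function.Bijective f := Finite.injective_iff_bijective.1 hinj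
  refine ⟨⟨Equiv.ofBijective f hbij, hkey _ _⟩, ?_, ?_⟩
  · -- not induced by the action
    intro m heq
    have happ : ∀ z, ap ρ (Multiplicative.toAdd m) z = f z := by
      intro z
      have h0 := congrArg (fun g : P ≃o P => g z) heq
      show ρ (Multiplicative.ofAdd (Multiplicative.toAdd m)) z = f z; exact h0
    have hpx : pz x = x := by
      rw [hpz_def]; dsimp only; rw [if_pos (self_mem_aorbit ρ x)]
    have hcxz : cst x = 0 := by
      rw [hcst_def]; dsimp only; rw [if_pos (self_mem_aorbit ρ x)]
    have hμx : μ x = 0 := by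
      have h0 := hμ x
      rw [hpx] at h0
      exact hsx _ h0
    have hfx : f x = x := by
      rw [hf_def]; dsimp only; rw [hpx, hcxz, hμx, show (0 : ZMod 4) - 0 = 0 by ring, ap_zero]
    have hk0 : Multiplicative.toAdd m = 0 := hsx _ (by rw [happ x, hfx])
    set z1 := ap ρ 1 x with hz1
    have hz1mem : z1 ∈ aorbit ρ x := ap_mem_aorbit ρ 1 x
    have hz1x : z1 ∉ aorbit ρ x → False := fun h => h hz1mem
    have hpz1 : pz z1 = x := by
      rw [hpz_def]; dsimp only; rw [if_pos hz1mem]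
    have hcz1 : cst z1 = 0 := by
      rw [hcst_def]; dsimp only; rw [if_pos hz1mem]
    have hμz1 : μ z1 = 1 := by
      have h0 := hμ z1
      rw [hpz1, hz1] at h0
      have h1 := congrArg (ap ρ (-1)) h0
      rw [ap_add, ap_add, show (-1 : ZMod 4) + 1 = 0 by ring, ap_zero] at h1
      have h2 := hsx _ h1
      linear_combination h2
    have hfz1 : f z1 = ap ρ (0 - 1) x := by
      rw [hf_def]; dsimp only; rw [hpz1, hcz1, hμz1]
    have h4 := happ z1
    rw [hk0, ap_zero, hfz1, hz1] at h4
    have h5 := congrArg (ap ρ 1) h4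
    rw [ap_add, ap_add, show (1 : ZMod 4) + (0 - 1) = 0 by ring, ap_zero] at h5
    have h6 := hsx _ h5
    exact absurd h6 (by decide)
  · -- orbit invariance
    intro z
    have hfz_mem : ∀ w, f w ∈ aorbit ρ w := by
      intro w
      have h1 : f w ∈ aorbit ρ (pz w) := ap_mem_aorbit ρ _ _
      rcases hcases w with ⟨hp, -, hm⟩ | ⟨hp, -, hm⟩ | ⟨hp, -, hm⟩ <;>
        rw [hp] at h1 <;> rw [aorbit_eq_of_mem ρ hm] <;> exact h1
    have hco : ⇑(⟨Equiv.ofBijective f hbij, hkey _ _⟩ :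
        ((P ≃o P))) = f := rfl
    rw [hco]
    have hsub : f '' aorbit ρ z ⊆ aorbit ρ z := by
      rintro _ ⟨w, hw, rfl⟩
      have h1 := hfz_mem w
      rwa [aorbit_eq_of_mem ρ hw] at h1
    exact Set.eq_of_subset_of_ncard_le hsub
      (le_of_eq (Set.ncard_image_of_injective _ hinj).symm) (Set.toFinite _)


lemma main_two (x y : P) (hxy : aorbit ρ x ≠ aorbit ρ y) (hcx : (aorbit ρ x).ncard = 4)
    (hmem : ∀ z : P, z ∈ aorbit ρ x ∨ z ∈ aorbit ρ y) :
    ∃ φ : P ≃o P, (∀ m : Multiplicative (ZMod 4), ρ m ≠ φ) ∧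
      ∀ z : P, φ '' aorbit ρ z = aorbit ρ z := by
  classical
  have hsx : ∀ k : ZMod 4, ap ρ k x = x → k = 0 := fun k hk => stab4 ρ hcx hk
  obtain ⟨d, hS, hS'⟩ :=
    comb2 (fun k => decide (x ≤ ap ρ k y)) (fun k => decide (y ≤ ap ρ k x))
      (by
        intro k l hk hl
        rw [decide_eq_true_eq] at hk hl
        exact cross_asym ρ hxy hk hl)
  have Gxy : ∀ k, x ≤ ap ρ k y ↔ x ≤ ap ρ (d - k) y := by
    intro k; have := hS k; rwa [decide_eq_decide] at this
  have Gyx : ∀ k, y ≤ ap ρ k x ↔ y ≤ ap ρ (-d - k) x := by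
    intro k; have := hS' k; rwa [decide_eq_decide] at this
  set pz : P → P := fun z => if z ∈ aorbit ρ x then x else y with hpz_def
  set cst : P → ZMod 4 := fun z => if z ∈ aorbit ρ x then 0 else d with hcst_def
  have hex : ∀ z, ∃ k, ap ρ k (pz z) = z := by
    intro z
    rw [hpz_def]
    dsimp only
    split_ifs with h1
    · exact (mem_aorbit ρ).1 h1
    · rcases hmem z with h | h
      · exact absurd h h1
      · exact (mem_aorbit ρ).1 h
  set μ : P → ZMod 4 := fun z => Classical.choose (hex z) with hμ_def
  have hμ : ∀ z, ap ρ (μ z) (pz z) = z := fun z => Classical.choose_spec (hex z)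
  have hcases : ∀ z, (pz z = x ∧ cst z = 0 ∧ z ∈ aorbit ρ x) ∨
      (pz z = y ∧ cst z = d ∧ z ∈ aorbit ρ y) := by
    intro z
    rw [hpz_def, hcst_def]
    dsimp only
    split_ifs with h1
    · exact Or.inl ⟨rfl, rfl, h1⟩
    · refine Or.inr ⟨rfl, rfl, ?_⟩
      rcases hmem z with h | h
      · exact absurd h h1
      · exact h
  have hGood : ∀ z w (k : ZMod 4),
      pz z ≤ ap ρ k (pz w) ↔ pz z ≤ ap ρ ((cst w - cst z) - k) (pz w) := by
    intro z w k
    rcases hcases z with ⟨hp1, hc1, -⟩ | ⟨hp1, hc1, -⟩ <;>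
      rcases hcases w with ⟨hp2, hc2, -⟩ | ⟨hp2, hc2, -⟩ <;>
      rw [hp1, hp2, hc1, hc2]
    · rw [show (0 : ZMod 4) - 0 - k = 0 - k by ring]; exact Gdiag ρ x k
    · rw [show d - 0 - k = d - k by ring]; exact Gxy k
    · rw [show (0 : ZMod 4) - d - k = -d - k by ring]; exact Gyx k
    · rw [show d - d - k = 0 - k by ring]; exact Gdiag ρ y k
  set f : P → P := fun z => ap ρ (cst z - μ z) (pz z) with hf_def
  have hkey : ∀ z w, f z ≤ f w ↔ z ≤ w := by
    intro z w
    have h1 : f z ≤ f w ↔ ap ρ (μ z - cst z) (f z) ≤ ap ρ (μ z - cst z) (f w) :=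
      (ap_le_ap ρ _).symm
    have h2 : ap ρ (μ z - cst z) (f z) = pz z := by
      show ap ρ (μ z - cst z) (ap ρ (cst z - μ z) (pz z)) = pz z
      rw [ap_add, show μ z - cst z + (cst z - μ z) = 0 by ring, ap_zero]
    have h3 : ap ρ (μ z - cst z) (f w) = ap ρ ((cst w - cst z) - (μ w - μ z)) (pz w) := by
      show ap ρ (μ z - cst z) (ap ρ (cst w - μ w) (pz w)) = _
      rw [ap_add, show μ z - cst z + (cst w - μ w) = (cst w - cst z) - (μ w - μ z) by ring]
    have h4 : z ≤ w ↔ ap ρ (0 - μ z) z ≤ ap ρ (0 - μ z) w := (ap_le_ap ρ _).symm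
    have h5 : ap ρ (0 - μ z) z = pz z := by
      nth_rewrite 2 [← hμ z]
      rw [ap_add, show 0 - μ z + μ z = 0 by ring, ap_zero]
    have h6 : ap ρ (0 - μ z) w = ap ρ (μ w - μ z) (pz w) := by
      nth_rewrite 1 [← hμ w]
      rw [ap_add, show 0 - μ z + μ w = μ w - μ z by ring]
    rw [h1, h2, h3, h4, h5, h6]
    exact (hGood z w (μ w - μ z)).symm
  have hinj : Function.Injective f := by
    intro z w h
    exact le_antisymm ((hkey z w).1 h.le) ((hkey w z).1 h.ge)
  have hbij : Function.Bijective f := Finite.injective_iff_bijective.1 hinj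
  refine ⟨⟨Equiv.ofBijective f hbij, hkey _ _⟩, ?_, ?_⟩
  · intro m heq
    have happ : ∀ z, ap ρ (Multiplicative.toAdd m) z = f z := by
      intro z
      have h0 := congrArg (fun g : P ≃o P => g z) heq
      show ρ (Multiplicative.ofAdd (Multiplicative.toAdd m)) z = f z; exact h0
    have hpx : pz x = x := by
      rw [hpz_def]; dsimp only; rw [if_pos (self_mem_aorbit ρ x)]
    have hcxz : cst x = 0 := by
      rw [hcst_def]; dsimp only; rw [if_pos (self_mem_aorbit ρ x)]
    have hμx : μ x = 0 := by
      have h0 := hμ x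
      rw [hpx] at h0
      exact hsx _ h0
    have hfx : f x = x := by
      rw [hf_def]; dsimp only; rw [hpx, hcxz, hμx, show (0 : ZMod 4) - 0 = 0 by ring, ap_zero]
    have hk0 : Multiplicative.toAdd m = 0 := hsx _ (by rw [happ x, hfx])
    set z1 := ap ρ 1 x with hz1
    have hz1mem : z1 ∈ aorbit ρ x := ap_mem_aorbit ρ 1 x
    have hpz1 : pz z1 = x := by
      rw [hpz_def]; dsimp only; rw [if_pos hz1mem]
    have hcz1 : cst z1 = 0 := by
      rw [hcst_def]; dsimp only; rw [if_pos hz1mem]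
    have hμz1 : μ z1 = 1 := by
      have h0 := hμ z1
      rw [hpz1, hz1] at h0
      have h1 := congrArg (ap ρ (-1)) h0
      rw [ap_add, ap_add, show (-1 : ZMod 4) + 1 = 0 by ring, ap_zero] at h1
      have h2 := hsx _ h1
      linear_combination h2
    have hfz1 : f z1 = ap ρ (0 - 1) x := by
      rw [hf_def]; dsimp only; rw [hpz1, hcz1, hμz1]
    have h4 := happ z1
    rw [hk0, ap_zero, hfz1, hz1] at h4
    have h5 := congrArg (ap ρ 1) h4
    rw [ap_add, ap_add, show (1 : ZMod 4) + (0 - 1) = 0 by ring, ap_zero] at h5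
    have h6 := hsx _ h5
    exact absurd h6 (by decide)
  · intro z
    have hfz_mem : ∀ w, f w ∈ aorbit ρ w := by
      intro w
      have h1 : f w ∈ aorbit ρ (pz w) := ap_mem_aorbit ρ _ _
      rcases hcases w with ⟨hp, -, hm⟩ | ⟨hp, -, hm⟩ <;>
        rw [hp] at h1 <;> rw [aorbit_eq_of_mem ρ hm] <;> exact h1
    have hco : ⇑(⟨Equiv.ofBijective f hbij, hkey _ _⟩ :
        ((P ≃o P))) = f := rfl
    rw [hco]
    have hsub : f '' aorbit ρ z ⊆ aorbit ρ z := by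
      rintro _ ⟨w, hw, rfl⟩
      have h1 := hfz_mem w
      rwa [aorbit_eq_of_mem ρ hw] at h1
    exact Set.eq_of_subset_of_ncard_le hsub
      (le_of_eq (Set.ncard_image_of_injective _ hinj).symm) (Set.toFinite _)

end Z4aux

open Z4aux in
/-- Let `ℤ/4ℤ` act by automorphisms on a finite poset `P` with either exactly two orbits,
both of cardinality `4`, or exactly three orbits, two of cardinality `4` and one of
cardinality `2`. Then there is an automorphism `φ` of `P` not induced by the action such
that every orbit of the action is `φ`-invariant. -/
theorem exists_extra_automorphism_Z4 (P : Type) [PartialOrder P] [Fintype P]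
    (ρ : Multiplicative (ZMod 4) →* (P ≃o P))
    (hcfg :
      (∃ x y : P, aorbit ρ x ≠ aorbit ρ y ∧
        (aorbit ρ x).ncard = 4 ∧ (aorbit ρ y).ncard = 4 ∧
        ∀ z : P, aorbit ρ z = aorbit ρ x ∨ aorbit ρ z = aorbit ρ y) ∨
      (∃ x y u : P, aorbit ρ x ≠ aorbit ρ y ∧ aorbit ρ x ≠ aorbit ρ u ∧
        aorbit ρ y ≠ aorbit ρ u ∧
        (aorbit ρ x).ncard = 4 ∧ (aorbit ρ y).ncard = 4 ∧ (aorbit ρ u).ncard = 2 ∧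
        ∀ z : P, aorbit ρ z = aorbit ρ x ∨ aorbit ρ z = aorbit ρ y ∨
          aorbit ρ z = aorbit ρ u)) :
    ∃ φ : P ≃o P, (∀ m : Multiplicative (ZMod 4), ρ m ≠ φ) ∧
      ∀ z : P, φ '' aorbit ρ z = aorbit ρ z := by
  rcases hcfg with ⟨x, y, hxy, hcx, hcy, hcover⟩ | ⟨x, y, u, hxy, hxu, hyu, hcx, hcy, hcu, hcover⟩
  · refine main_two ρ x y hxy hcx ?_
    intro z
    rcases hcover z with h | h
    · exact Or.inl (h ▸ self_mem_aorbit ρ z)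
    · exact Or.inr (h ▸ self_mem_aorbit ρ z)
  · refine main_three ρ x y u hxy hxu hyu hcx hcu ?_
    intro z
    rcases hcover z with h | h | h
    · exact Or.inl (h ▸ self_mem_aorbit ρ z)
    · exact Or.inr (Or.inl (h ▸ self_mem_aorbit ρ z))
    · exact Or.inr (Or.inr (h ▸ self_mem_aorbit ρ z))
end

section
/- Let p be 3, 5 or 7. Let P be a finite poset with Aut(P) cyclic of order n ≥ 1, and let g be a generator of Aut(P). Suppose ⟨g⟩ has an orbit A of cardinality p and a distinct orbit B of cardinality p·k for some k ≥ 1 with p ∤ k. Then ⟨g⟩ has a third orbit, distinct from A and B, whose cardinality is divisible by p. -/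
namespace Third

variable {P : Type} [PartialOrder P]

lemma mul_apply (f h : P ≃o P) (x : P) : (f * h) x = f (h x) := rfl

lemma one_apply (x : P) : (1 : P ≃o P) x = x := rfl

lemma apply_add (g : P ≃o P) (m m' : ℤ) (x : P) : (g ^ (m + m')) x = (g ^ m) ((g ^ m') x) := by
  rw [zpow_add]; rfl

lemma mem_orbit_pow (g : P ≃o P) (x : P) (m : ℤ) : (g ^ m) x ∈ orbit g x := ⟨m, rfl⟩

lemma mem_orbit_self (g : P ≃o P) (x : P) : x ∈ orbit g x := ⟨0, by rw [zpow_zero]; rfl⟩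

lemma orbit_eq (g : P ≃o P) {x y : P} (h : y ∈ orbit g x) : orbit g y = orbit g x := by
  obtain ⟨t, rfl⟩ := h
  ext z
  constructor
  · rintro ⟨m, rfl⟩
    exact ⟨m + t, (apply_add g m t x)⟩
  · rintro ⟨m, rfl⟩
    refine ⟨m - t, ?_⟩
    rw [← apply_add]
    norm_num
  
lemma dvd_iff_cast (p : ℕ) (m m' : ℤ) : (p:ℤ) ∣ (m' - m) ↔ ((m : ZMod p) = m') := by
  rw [ZMod.intCast_eq_intCast_iff]
  exact (Int.modEq_iff_dvd).symm

lemma castval (p : ℕ) [NeZero p] (z : ZMod p) : ((z.val : ℤ) : ZMod p) = z := by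
  push_cast
  simp [ZMod.natCast_val, ZMod.cast_id]

lemma eq_iff_of_key (g : P ≃o P) (x : P) (d : ℤ) (hkey : ∀ m : ℤ, ((g ^ m) x = x ↔ d ∣ m))
    (m m' : ℤ) : (g ^ m) x = (g ^ m') x ↔ d ∣ m - m' := by
  have h1 : (g ^ m) x = (g ^ m') ((g ^ (m - m')) x) := by
    rw [← apply_add]
    norm_num
  rw [h1, ← hkey (m - m')]
  exact ⟨fun h => (g ^ m').injective h, fun h => by rw [h]⟩

lemma key (g : P ≃o P) [Fintype P] (N : ℕ) (hN : 0 < N) (hgN : g ^ N = 1) (x : P) :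
    0 < (orbit g x).ncard ∧ ∀ m : ℤ, ((g ^ m) x = x ↔ ((orbit g x).ncard : ℤ) ∣ m) := by
  classical
  have hex : ∃ d : ℕ, 0 < d ∧ (g ^ (d:ℤ)) x = x :=
    ⟨N, hN, by rw [zpow_natCast, hgN]; rfl⟩
  obtain ⟨hdpos, hdfix⟩ := Nat.find_spec hex
  set d := Nat.find hex with hd
  have hfixnat : ∀ q : ℕ, ((g ^ (d:ℤ)) ^ q) x = x := by
    intro q; induction q with
    | zero => rfl
    | succ q ih => rw [pow_succ, mul_apply, hdfix, ih]
  have hfix : ∀ q : ℤ, (g ^ ((d:ℤ) * q)) x = x := by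
    intro q
    rw [zpow_mul]
    rcases q with q | q
    · rw [Int.ofNat_eq_coe, zpow_natCast]; exact hfixnat q
    · rw [zpow_negSucc]
      have h1 : ((g ^ (d:ℤ)) ^ (q+1)) x = x := hfixnat (q+1)
      conv_lhs => rw [← h1]
      exact ((g ^ (d:ℤ)) ^ (q+1)).symm_apply_apply x
  have hdvd : ∀ m : ℤ, (g ^ m) x = x ↔ (d:ℤ) ∣ m := by
    intro m
    constructor
    · intro hm
      have hdz : (0:ℤ) < (d:ℤ) := by exact_mod_cast hdpos
      have hm2 : m = (d:ℤ) * (m / d) + m % d := (Int.mul_ediv_add_emod m d).symm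
      have h3 : (g ^ ((d:ℤ) * (m / d))) ((g ^ (m % (d:ℤ))) x) = (g ^ ((d:ℤ) * (m / d))) x := by
        rw [← apply_add, ← hm2, hm, hfix]
      have hrx : (g ^ (m % (d:ℤ))) x = x := (g ^ ((d:ℤ) * (m / d))).injective h3
      have hr0 : 0 ≤ m % (d:ℤ) := Int.emod_nonneg m (by positivity)
      have hrlt : m % (d:ℤ) < d := Int.emod_lt_of_pos m hdz
      by_contra hnd
      have hrne : m % (d:ℤ) ≠ 0 := fun h0 => hnd (Int.dvd_of_emod_eq_zero h0)
      have : ¬ ((m % (d:ℤ)).toNat < d) := by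
        intro hlt
        exact Nat.find_min hex hlt ⟨by omega, by rw [Int.toNat_of_nonneg hr0]; exact hrx⟩
      omega
    · rintro ⟨q, rfl⟩; exact hfix q
  have heq := eq_iff_of_key g x (d:ℤ) hdvd
  have horb : orbit g x = ↑((Finset.range d).image (fun j : ℕ => (g ^ (j:ℤ)) x)) := by
    ext y
    simp only [orbit, Set.mem_setOf_eq, Finset.coe_image, Set.mem_image, Finset.mem_coe,
      Finset.mem_range]
    constructor
    · rintro ⟨m, rfl⟩
      have hdz : (0:ℤ) < (d:ℤ) := by exact_mod_cast hdpos
      have hr0 : 0 ≤ m % (d:ℤ) := Int.emod_nonneg m (by positivity)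
      have hrlt : m % (d:ℤ) < d := Int.emod_lt_of_pos m hdz
      have hlt2 : ((m % (d:ℤ)).toNat : ℤ) < (d:ℤ) := by rw [Int.toNat_of_nonneg hr0]; exact hrlt
      refine ⟨(m % (d:ℤ)).toNat, by exact_mod_cast hlt2, ?_⟩
      apply (heq _ _).mpr
      rw [Int.toNat_of_nonneg hr0]
      exact ⟨-(m / d), by have := Int.mul_ediv_add_emod m d; linarith⟩
    · rintro ⟨j, _, rfl⟩; exact ⟨j, rfl⟩
  have hinj : Set.InjOn (fun j : ℕ => (g ^ (j:ℤ)) x) (Finset.range d) := by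
    intro i hi j hj hij
    simp only [Finset.coe_range, Set.mem_Iio] at hi hj
    have := (heq (i:ℤ) (j:ℤ)).mp hij
    have h2 : ((i:ℤ) - j) = 0 := by
      rcases this with ⟨c, hc⟩
      rcases lt_trichotomy c 0 with h | h | h
      · nlinarith [hc]
      · simp [h] at hc; omega
      · nlinarith [hc]
    omega
  have hncard : (orbit g x).ncard = d := by
    rw [horb, Set.ncard_coe_finset, Finset.card_image_of_injOn hinj, Finset.card_range]
  rw [hncard]
  exact ⟨hdpos, hdvd⟩

lemma antichain (g : P ≃o P) [Fintype P] (N : ℕ) (hN : 0 < N) (hgN : g ^ N = 1) (x : P)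
    (t : ℤ) : ¬ (x < (g ^ t) x) := by
  intro hlt
  obtain ⟨hpos, hiff⟩ := key g N hN hgN x
  set d := (orbit g x).ncard with hd
  have hchain : ∀ j : ℕ, x < (g ^ (t * (j+1))) x := by
    intro j; induction j with
    | zero => simpa using hlt
    | succ j ih =>
      have h2 : (g ^ t) x < (g ^ t) ((g ^ (t*((j:ℤ)+1))) x) := (g ^ t).strictMono ih
      rw [← apply_add] at h2
      have h3 := lt_trans hlt h2
      have : t + t * ((j:ℤ)+1) = t * (((j:ℕ)+1:ℕ)+1) := by push_cast; ring
      rwa [this] at h3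
  have hdfix : (g ^ (t * d)) x = x := (hiff _).mpr ⟨t, by ring⟩
  have h4 := hchain (d - 1)
  have h5 : ((d:ℕ) - 1 + 1 : ℤ) = (d:ℤ) := by omega
  rw [show (((d-1:ℕ):ℤ)+1) = ((d:ℕ) - 1 + 1 : ℤ) from by push_cast [Nat.cast_sub hpos]; ring] at h4
  rw [h5, hdfix] at h4
  exact lt_irrefl _ h4


lemma aff3 : ∀ S : Finset (ZMod 3), ∃ α γ : ZMod 3, α ≠ 0 ∧ ¬(α = 1 ∧ γ = 0) ∧
    ∀ δ, (δ ∈ S ↔ α*δ+γ ∈ S) := by decide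

set_option maxRecDepth 10000 in
lemma aff5 : ∀ S : Finset (ZMod 5), ∃ α γ : ZMod 5, α ≠ 0 ∧ ¬(α = 1 ∧ γ = 0) ∧
    ∀ δ, (δ ∈ S ↔ α*δ+γ ∈ S) := by decide

set_option maxRecDepth 10000 in
lemma aff7 : ∀ S : Finset (ZMod 7), ∃ α γ : ZMod 7, α ≠ 0 ∧ ¬(α = 1 ∧ γ = 0) ∧
    ∀ δ, (δ ∈ S ↔ α*δ+γ ∈ S) := by decide

lemma affP (p : ℕ) (hp : p = 3 ∨ p = 5 ∨ p = 7) (S T : Finset (ZMod p))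
    (hST : S = ∅ ∨ T = ∅) :
    ∃ α γ : ZMod p, α ≠ 0 ∧ ¬(α = 1 ∧ γ = 0) ∧ (∀ δ, (δ ∈ S ↔ α*δ+γ ∈ S)) ∧
      (∀ δ, (δ ∈ T ↔ α*δ+γ ∈ T)) := by
  have main : ∀ S' : Finset (ZMod p), ∃ α γ : ZMod p, α ≠ 0 ∧ ¬(α = 1 ∧ γ = 0) ∧
      ∀ δ, (δ ∈ S' ↔ α*δ+γ ∈ S') := by
    rcases hp with rfl | rfl | rfl
    exacts [aff3, aff5, aff7]
  rcases hST with rfl | rfl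
  · obtain ⟨α, γ, h1, h2, h3⟩ := main T
    exact ⟨α, γ, h1, h2, fun δ => by simp, h3⟩
  · obtain ⟨α, γ, h1, h2, h3⟩ := main S
    exact ⟨α, γ, h1, h2, h3, fun δ => by simp⟩

open Classical in
noncomputable def Fmap (g : P ≃o P) (p k : ℕ) (a bb : P) (α γ : ZMod p) (x : P) : P :=
  if hx : x ∈ orbit g a then
    (g ^ (((α * ((Classical.choose (show ∃ m : ℤ, (g ^ m) a = x from hx) : ℤ) : ZMod p)).val : ℕ) : ℤ)) a
  else if hx' : x ∈ orbit g bb then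
    (g ^ ((Classical.choose (show ∃ m : ℤ, (g ^ m) bb = x from hx') : ℤ) +
      (k:ℤ) * ((((α - 1) * ((Classical.choose (show ∃ m : ℤ, (g ^ m) bb = x from hx') : ℤ) : ZMod p) + γ) * (k : ZMod p)⁻¹).val : ℤ))) bb
  else x

lemma Fmap_A (g : P ≃o P) (p k : ℕ) [NeZero p] (a bb : P) (α γ : ZMod p)
    (keya : ∀ m : ℤ, ((g ^ m) a = a ↔ (p:ℤ) ∣ m)) (m : ℤ) :
    Fmap g p k a bb α γ ((g ^ m) a) = (g ^ (((α * (m : ZMod p)).val : ℕ) : ℤ)) a := by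
  have hx : (g ^ m) a ∈ orbit g a := ⟨m, rfl⟩
  rw [Fmap, dif_pos hx]
  have hm0 : (g ^ (Classical.choose (show ∃ m' : ℤ, (g ^ m') a = (g ^ m) a from hx))) a
      = (g ^ m) a := Classical.choose_spec (show ∃ m' : ℤ, (g ^ m') a = (g ^ m) a from hx)
  have hdv := (eq_iff_of_key g a (p:ℤ) keya _ _).mp hm0
  have hc : ((Classical.choose (show ∃ m' : ℤ, (g ^ m') a = (g ^ m) a from hx) : ℤ) : ZMod p)
      = (m : ZMod p) := by
    rw [← dvd_iff_cast]
    exact dvd_sub_comm.mp hdv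
  rw [hc]

lemma Fmap_B (g : P ≃o P) (p k : ℕ) [NeZero p] (a bb : P) (α γ : ZMod p)
    (hnotA : ∀ s : ℤ, (g ^ s) bb ∉ orbit g a)
    (keyb : ∀ m : ℤ, ((g ^ m) bb = bb ↔ ((p*k : ℕ):ℤ) ∣ m)) (m : ℤ) :
    Fmap g p k a bb α γ ((g ^ m) bb)
      = (g ^ (m + (k:ℤ) * ((((α - 1) * (m : ZMod p) + γ) * (k : ZMod p)⁻¹).val : ℤ))) bb := by
  have hx' : (g ^ m) bb ∈ orbit g bb := ⟨m, rfl⟩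
  rw [Fmap, dif_neg (hnotA m), dif_pos hx']
  set m₀ := Classical.choose (show ∃ m' : ℤ, (g ^ m') bb = (g ^ m) bb from hx') with hm₀def
  have hm0 : (g ^ m₀) bb = (g ^ m) bb :=
    Classical.choose_spec (show ∃ m' : ℤ, (g ^ m') bb = (g ^ m) bb from hx')
  have hdvdpk : ((p*k:ℕ):ℤ) ∣ m₀ - m := (eq_iff_of_key g bb _ keyb _ _).mp hm0
  have hdvdp : (p:ℤ) ∣ m₀ - m := dvd_trans ⟨(k:ℤ), by push_cast; ring⟩ hdvdpk
  have hc : ((m₀ : ℤ) : ZMod p) = (m : ZMod p) := by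
    rw [← dvd_iff_cast]
    exact dvd_sub_comm.mp hdvdp
  rw [hc]
  apply (eq_iff_of_key g bb _ keyb _ _).mpr
  have : m₀ + (k:ℤ) * ((((α - 1) * (m : ZMod p) + γ) * (k : ZMod p)⁻¹).val : ℤ)
      - (m + (k:ℤ) * ((((α - 1) * (m : ZMod p) + γ) * (k : ZMod p)⁻¹).val : ℤ)) = m₀ - m := by ring
  rw [this]
  exact hdvdpk

lemma Fmap_O (g : P ≃o P) (p k : ℕ) (a bb : P) (α γ : ZMod p) (x : P)
    (hx : x ∉ orbit g a) (hx' : x ∉ orbit g bb) :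
    Fmap g p k a bb α γ x = x := by
  rw [Fmap, dif_neg hx, dif_neg hx']

end Third


open Third

/-- Let `p ∈ {3,5,7}` and let `P` be a finite poset with `Aut(P)` cyclic of order `n ≥ 1`
generated by `g`. If `⟨g⟩` has an orbit of cardinality `p` and a distinct orbit of
cardinality `p·k` with `p ∤ k`, then it has a third orbit, distinct from both, whose
cardinality is divisible by `p`. -/
theorem third_orbit_div_p (p : ℕ) (hp : p = 3 ∨ p = 5 ∨ p = 7)
    (n : ℕ) (hn : 1 ≤ n)
    (P : Type) [PartialOrder P] [Fintype P] (g : P ≃o P)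
    (hord : orderOf g = n) (hgen : ∀ φ : P ≃o P, ∃ m : ℤ, g ^ m = φ)
    (a bb : P) (k : ℕ) (hk : 1 ≤ k) (hpk : ¬ p ∣ k)
    (hab : orbit g a ≠ orbit g bb)
    (ha : (orbit g a).ncard = p) (hb : (orbit g bb).ncard = p * k) :
    ∃ c : P, orbit g c ≠ orbit g a ∧ orbit g c ≠ orbit g bb ∧
      p ∣ (orbit g c).ncard := by
  by_contra hcon
  push_neg at hcon
  classical
  have hp' : p.Prime := by rcases hp with rfl | rfl | rfl <;> norm_num
  haveI : Fact p.Prime := ⟨hp'⟩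
  haveI : NeZero p := ⟨hp'.ne_zero⟩
  have hgN : g ^ n = 1 := by rw [← hord]; exact pow_orderOf_eq_one g
  have keya : ∀ m : ℤ, ((g ^ m) a = a ↔ (p:ℤ) ∣ m) := by
    have h := (Third.key g n hn hgN a).2
    rwa [ha] at h
  have keyb : ∀ m : ℤ, ((g ^ m) bb = bb ↔ ((p*k:ℕ):ℤ) ∣ m) := by
    have h := (Third.key g n hn hgN bb).2
    rwa [hb] at h
  have hbnotA : ∀ s : ℤ, (g ^ s) bb ∉ orbit g a := by
    intro s hmem
    exact hab ((Third.orbit_eq g hmem).symm.trans (Third.orbit_eq g (Third.mem_orbit_pow g bb s)))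
  have hk0 : (k : ZMod p) ≠ 0 := fun h =>
    hpk ((ZMod.natCast_eq_zero_iff k p).mp h)
  have pdvd : ∀ m m' : ℤ, ((m : ZMod p) = (m' : ZMod p)) ↔ (p:ℤ) ∣ m - m' := by
    intro m m'
    constructor
    · intro h; exact dvd_sub_comm.mp ((Third.dvd_iff_cast p m m').mpr h)
    · intro h; exact (Third.dvd_iff_cast p m m').mp (dvd_sub_comm.mp h)
  have hco : IsCoprime (p:ℤ) (k:ℤ) := by
    rw [Int.isCoprime_iff_gcd_eq_one, Int.gcd_natCast_natCast]
    exact (Nat.Prime.coprime_iff_not_dvd hp').mpr hpk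
  have pkdvd : ∀ t : ℤ, (p:ℤ) ∣ t → (k:ℤ) ∣ t → ((p*k:ℕ):ℤ) ∣ t := by
    intro t h1 h2
    push_cast
    exact hco.mul_dvd h1 h2
  have conj : ∀ (s t : ℤ) (z : P), (g ^ s) ((g ^ t) z) = (g ^ (s + t)) z :=
    fun s t z => (Third.apply_add g s t z).symm
  -- the delta sets
  set Slt : Finset (ZMod p) :=
    Finset.univ.filter (fun δ : ZMod p => a < (g ^ ((δ.val : ℕ) : ℤ)) bb) with hSltdef
  set Sgt : Finset (ZMod p) :=
    Finset.univ.filter (fun δ : ZMod p => (g ^ ((δ.val : ℕ) : ℤ)) bb < a) with hSgtdef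
  have shiftlt : ∀ t t' : ℤ, (p:ℤ) ∣ t' - t → a < (g ^ t) bb → a < (g ^ t') bb := by
    intro t t' hdvd hlt
    have h1 : (g ^ (t' - t)) a = a := (keya _).mpr hdvd
    have h2 := (g ^ (t' - t)).strictMono hlt
    rw [h1, conj] at h2
    rwa [show t' - t + t = t' from by ring] at h2
  have shiftgt : ∀ t t' : ℤ, (p:ℤ) ∣ t' - t → (g ^ t) bb < a → (g ^ t') bb < a := by
    intro t t' hdvd hlt
    have h1 : (g ^ (t' - t)) a = a := (keya _).mpr hdvd
    have h2 := (g ^ (t' - t)).strictMono hlt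
    rw [h1, conj] at h2
    rwa [show t' - t + t = t' from by ring] at h2
  have valdvd : ∀ t : ℤ, (p:ℤ) ∣ t - (((t : ZMod p)).val : ℤ) := by
    intro t
    rw [Third.dvd_iff_cast]
    exact Third.castval p _
  have memlt : ∀ t : ℤ, ((t : ZMod p) ∈ Slt ↔ a < (g ^ t) bb) := by
    intro t
    rw [hSltdef]
    simp only [Finset.mem_filter, Finset.mem_univ, true_and]
    constructor
    · intro h; exact shiftlt _ _ (valdvd t) h
    · intro h; exact shiftlt _ _ (dvd_sub_comm.mp (valdvd t)) h
  have memgt : ∀ t : ℤ, ((t : ZMod p) ∈ Sgt ↔ (g ^ t) bb < a) := by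
    intro t
    rw [hSgtdef]
    simp only [Finset.mem_filter, Finset.mem_univ, true_and]
    constructor
    · intro h; exact shiftgt _ _ (valdvd t) h
    · intro h; exact shiftgt _ _ (dvd_sub_comm.mp (valdvd t)) h
  have hST : Slt = ∅ ∨ Sgt = ∅ := by
    by_contra hboth
    push_neg at hboth
    obtain ⟨h1, h2⟩ := hboth
    obtain ⟨δ, hδ⟩ := h1
    obtain ⟨δ', hδ'⟩ := h2
    rw [hSltdef, Finset.mem_filter] at hδ
    rw [hSgtdef, Finset.mem_filter] at hδ'
    have h3 : (g ^ ((δ'.val : ℕ):ℤ)) bb < (g ^ ((δ.val : ℕ):ℤ)) bb := lt_trans hδ'.2 hδ.2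
    have h4 : (g ^ ((δ.val:ℕ):ℤ)) bb
        = (g ^ (((δ.val:ℕ):ℤ) - ((δ'.val:ℕ):ℤ))) ((g ^ ((δ'.val:ℕ):ℤ)) bb) := by
      rw [conj]; norm_num
    rw [h4] at h3
    exact Third.antichain g n hn hgN _ _ h3
  obtain ⟨α, γ, hα, hαγ, hSinv, hTinv⟩ := Third.affP p hp Slt Sgt hST
  -- facts about other orbits
  have dkey : ∀ z : P, z ∉ orbit g a → z ∉ orbit g bb →
      (((orbit g z).ncard : ZMod p) ≠ 0) ∧
      ∀ m : ℤ, ((g ^ m) z = z ↔ ((orbit g z).ncard : ℤ) ∣ m) := by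
    intro z hza hzb
    refine ⟨?_, (Third.key g n hn hgN z).2⟩
    intro h0
    have hdvd : p ∣ (orbit g z).ncard := (ZMod.natCast_eq_zero_iff _ p).mp h0
    have hza' : orbit g z ≠ orbit g a := fun h => hza (h ▸ Third.mem_orbit_self g z)
    have hzb' : orbit g z ≠ orbit g bb := fun h => hzb (h ▸ Third.mem_orbit_self g z)
    exact hcon z hza' hzb' hdvd
  have mono : ∀ (α' γ' : ZMod p), α' ≠ 0 →
      (∀ δ, δ ∈ Slt ↔ α' * δ + γ' ∈ Slt) → (∀ δ, δ ∈ Sgt ↔ α' * δ + γ' ∈ Sgt) →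
      ∀ x y : P, x < y → Fmap g p k a bb α' γ' x < Fmap g p k a bb α' γ' y := by
    intro α' γ' hα' hS hT x y hxy
    by_cases hxa : x ∈ orbit g a
    · obtain ⟨i, rfl⟩ := hxa
      by_cases hya : y ∈ orbit g a
      · obtain ⟨i', rfl⟩ := hya
        exfalso
        have h1 : (g ^ i') a = (g ^ (i' - i)) ((g ^ i) a) := by rw [conj]; norm_num
        rw [h1] at hxy
        exact Third.antichain g n hn hgN _ _ hxy
      by_cases hyb : y ∈ orbit g bb
      · obtain ⟨j, rfl⟩ := hyb
        rw [Third.Fmap_A g p k a bb α' γ' keya i,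
            Third.Fmap_B g p k a bb α' γ' hbnotA keyb j]
        have h2 := (g ^ (-i)).strictMono hxy
        rw [conj, conj, show -i + i = 0 from by ring, zpow_zero, Third.one_apply] at h2
        have hδ : ((-i + j : ℤ) : ZMod p) ∈ Slt := (memlt _).mpr h2
        have hδ' := (hS _).mp hδ
        set vA : ℤ := (((α' * ((i:ℤ) : ZMod p)).val : ℕ) : ℤ) with hvA
        set W : ℤ := (((((α' - 1) * ((j:ℤ) : ZMod p) + γ') * ((k:ℕ) : ZMod p)⁻¹).val : ℕ) : ℤ)
          with hW
        set T : ℤ := ((j:ℤ) + (k:ℤ) * W) - vA with hTdef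
        have hTc : ((T : ℤ) : ZMod p) = α' * ((-i + j : ℤ) : ZMod p) + γ' := by
          rw [hTdef, hvA, hW]
          push_cast [ZMod.natCast_val, ZMod.cast_id]
          field_simp
          ring
        have hlt3 : a < (g ^ T) bb := (memlt T).mp (hTc ▸ hδ')
        have happ := (g ^ vA).strictMono hlt3
        rw [conj, show vA + T = (j:ℤ) + (k:ℤ) * W from by rw [hTdef]; ring] at happ
        exact happ
      · -- x in A, y in other orbit
        rw [Third.Fmap_A g p k a bb α' γ' keya i,
            Third.Fmap_O g p k a bb α' γ' y hya hyb]
        obtain ⟨hd0, keyy⟩ := dkey y hya hyb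
        set d := (orbit g y).ncard with hdd
        set vA : ℤ := (((α' * ((i:ℤ) : ZMod p)).val : ℕ) : ℤ) with hvA
        set u : ℤ := ((((((vA:ℤ) : ZMod p) - ((i:ℤ) : ZMod p)) * ((d:ℕ) : ZMod p)⁻¹).val : ℕ) : ℤ)
          * (d:ℤ) with hu
        have hud : (d:ℤ) ∣ u := dvd_mul_left _ _
        have hup : (p:ℤ) ∣ vA - (u + i) := by
          rw [← pdvd]
          rw [hu, hvA]
          push_cast [ZMod.natCast_val, ZMod.cast_id]
          field_simp
          ring
        have hfix : (g ^ u) y = y := (keyy u).mpr hud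
        have happ := (g ^ u).strictMono hxy
        rw [conj, hfix] at happ
        rwa [(Third.eq_iff_of_key g a (p:ℤ) keya (u+i) vA).mpr (dvd_sub_comm.mp hup)] at happ
    by_cases hxb : x ∈ orbit g bb
    · obtain ⟨j, rfl⟩ := hxb
      by_cases hya : y ∈ orbit g a
      · obtain ⟨i, rfl⟩ := hya
        rw [Third.Fmap_A g p k a bb α' γ' keya i,
            Third.Fmap_B g p k a bb α' γ' hbnotA keyb j]
        have h2 := (g ^ (-i)).strictMono hxy
        rw [conj, conj, show -i + i = 0 from by ring, zpow_zero, Third.one_apply] at h2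
        have hδ : ((-i + j : ℤ) : ZMod p) ∈ Sgt := (memgt _).mpr h2
        have hδ' := (hT _).mp hδ
        set vA : ℤ := (((α' * ((i:ℤ) : ZMod p)).val : ℕ) : ℤ) with hvA
        set W : ℤ := (((((α' - 1) * ((j:ℤ) : ZMod p) + γ') * ((k:ℕ) : ZMod p)⁻¹).val : ℕ) : ℤ)
          with hW
        set T : ℤ := ((j:ℤ) + (k:ℤ) * W) - vA with hTdef
        have hTc : ((T : ℤ) : ZMod p) = α' * ((-i + j : ℤ) : ZMod p) + γ' := by
          rw [hTdef, hvA, hW]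
          push_cast [ZMod.natCast_val, ZMod.cast_id]
          field_simp
          ring
        have hlt3 : (g ^ T) bb < a := (memgt T).mp (hTc ▸ hδ')
        have happ := (g ^ vA).strictMono hlt3
        rw [conj, show vA + T = (j:ℤ) + (k:ℤ) * W from by rw [hTdef]; ring] at happ
        exact happ
      by_cases hyb : y ∈ orbit g bb
      · obtain ⟨j', rfl⟩ := hyb
        exfalso
        have h1 : (g ^ j') bb = (g ^ (j' - j)) ((g ^ j) bb) := by rw [conj]; norm_num
        rw [h1] at hxy
        exact Third.antichain g n hn hgN _ _ hxy
      · -- x in B, y in other orbit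
        rw [Third.Fmap_B g p k a bb α' γ' hbnotA keyb j,
            Third.Fmap_O g p k a bb α' γ' y hya hyb]
        obtain ⟨hd0, keyy⟩ := dkey y hya hyb
        set d := (orbit g y).ncard with hdd
        set W : ℤ := (((((α' - 1) * ((j:ℤ) : ZMod p) + γ') * ((k:ℕ) : ZMod p)⁻¹).val : ℕ) : ℤ)
          with hW
        set u : ℤ := W * (k:ℤ) * (((((d:ℕ) : ZMod p)⁻¹).val : ℕ) : ℤ) * (d:ℤ) with hu
        have hud : (d:ℤ) ∣ u := dvd_mul_left _ _
        have hukW : ((p*k:ℕ):ℤ) ∣ u - (k:ℤ) * W := by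
          apply pkdvd
          · rw [← pdvd, hu]
            push_cast [ZMod.natCast_val, ZMod.cast_id]
            field_simp
          · exact ⟨W * (((((d:ℕ) : ZMod p)⁻¹).val : ℕ) : ℤ) * (d:ℤ) - W, by rw [hu]; ring⟩
        have hfix : (g ^ u) y = y := (keyy u).mpr hud
        have happ := (g ^ u).strictMono hxy
        rw [conj, hfix] at happ
        have heq2 : (g ^ (u + j)) bb = (g ^ ((j:ℤ) + (k:ℤ) * W)) bb := by
          apply (Third.eq_iff_of_key g bb _ keyb _ _).mpr
          have h5 : (u + j) - ((j:ℤ) + (k:ℤ) * W) = u - (k:ℤ)*W := by ring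
          rw [h5]; exact hukW
        rwa [heq2] at happ
    · -- x in other orbit
      by_cases hya : y ∈ orbit g a
      · obtain ⟨i, rfl⟩ := hya
        rw [Third.Fmap_A g p k a bb α' γ' keya i,
            Third.Fmap_O g p k a bb α' γ' x hxa hxb]
        obtain ⟨hd0, keyx⟩ := dkey x hxa hxb
        set d := (orbit g x).ncard with hdd
        set vA : ℤ := (((α' * ((i:ℤ) : ZMod p)).val : ℕ) : ℤ) with hvA
        set u : ℤ := ((((((vA:ℤ) : ZMod p) - ((i:ℤ) : ZMod p)) * ((d:ℕ) : ZMod p)⁻¹).val : ℕ) : ℤ)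
          * (d:ℤ) with hu
        have hud : (d:ℤ) ∣ u := dvd_mul_left _ _
        have hup : (p:ℤ) ∣ vA - (u + i) := by
          rw [← pdvd]
          rw [hu, hvA]
          push_cast [ZMod.natCast_val, ZMod.cast_id]
          field_simp
          ring
        have hfix : (g ^ u) x = x := (keyx u).mpr hud
        have happ := (g ^ u).strictMono hxy
        rw [conj, hfix] at happ
        rwa [(Third.eq_iff_of_key g a (p:ℤ) keya (u+i) vA).mpr (dvd_sub_comm.mp hup)] at happ
      by_cases hyb : y ∈ orbit g bb
      · obtain ⟨j, rfl⟩ := hyb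
        rw [Third.Fmap_B g p k a bb α' γ' hbnotA keyb j,
            Third.Fmap_O g p k a bb α' γ' x hxa hxb]
        obtain ⟨hd0, keyx⟩ := dkey x hxa hxb
        set d := (orbit g x).ncard with hdd
        set W : ℤ := (((((α' - 1) * ((j:ℤ) : ZMod p) + γ') * ((k:ℕ) : ZMod p)⁻¹).val : ℕ) : ℤ)
          with hW
        set u : ℤ := W * (k:ℤ) * (((((d:ℕ) : ZMod p)⁻¹).val : ℕ) : ℤ) * (d:ℤ) with hu
        have hud : (d:ℤ) ∣ u := dvd_mul_left _ _
        have hukW : ((p*k:ℕ):ℤ) ∣ u - (k:ℤ) * W := by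
          apply pkdvd
          · rw [← pdvd, hu]
            push_cast [ZMod.natCast_val, ZMod.cast_id]
            field_simp
          · exact ⟨W * (((((d:ℕ) : ZMod p)⁻¹).val : ℕ) : ℤ) * (d:ℤ) - W, by rw [hu]; ring⟩
        have hfix : (g ^ u) x = x := (keyx u).mpr hud
        have happ := (g ^ u).strictMono hxy
        rw [conj, hfix] at happ
        have heq2 : (g ^ (u + j)) bb = (g ^ ((j:ℤ) + (k:ℤ) * W)) bb := by
          apply (Third.eq_iff_of_key g bb _ keyb _ _).mpr
          have h5 : (u + j) - ((j:ℤ) + (k:ℤ) * W) = u - (k:ℤ)*W := by ring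
          rw [h5]; exact hukW
        rwa [heq2] at happ
      · rw [Third.Fmap_O g p k a bb α' γ' x hxa hxb,
            Third.Fmap_O g p k a bb α' γ' y hya hyb]
        exact hxy
  have cancel : ∀ (α' γ' : ZMod p), α' ≠ 0 → ∀ x : P,
      Fmap g p k a bb α'⁻¹ (-(α'⁻¹ * γ')) (Fmap g p k a bb α' γ' x) = x := by
    intro α' γ' hα' x
    by_cases hxa : x ∈ orbit g a
    · obtain ⟨i, rfl⟩ := hxa
      rw [Third.Fmap_A g p k a bb α' γ' keya i,
          Third.Fmap_A g p k a bb α'⁻¹ (-(α'⁻¹ * γ')) keya _]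
      apply (Third.eq_iff_of_key g a (p:ℤ) keya _ _).mpr
      apply dvd_sub_comm.mp
      apply (pdvd _ _).mp
      push_cast [ZMod.natCast_val, ZMod.cast_id]
      rw [inv_mul_cancel_left₀ hα']
    by_cases hxb : x ∈ orbit g bb
    · obtain ⟨j, rfl⟩ := hxb
      rw [Third.Fmap_B g p k a bb α' γ' hbnotA keyb j,
          Third.Fmap_B g p k a bb α'⁻¹ (-(α'⁻¹ * γ')) hbnotA keyb _]
      apply (Third.eq_iff_of_key g bb _ keyb _ _).mpr
      set W1 : ℤ := (((((α' - 1) * ((j:ℤ) : ZMod p) + γ') * ((k:ℕ) : ZMod p)⁻¹).val : ℕ) : ℤ)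
        with hW1
      set j2 : ℤ := j + (k:ℤ) * W1 with hj2
      set W2 : ℤ := (((((α'⁻¹ - 1) * ((j2:ℤ) : ZMod p) + -(α'⁻¹ * γ')) *
        ((k:ℕ) : ZMod p)⁻¹).val : ℕ) : ℤ) with hW2
      have h6 : (j2 + (k:ℤ) * W2) - j = (k:ℤ) * (W1 + W2) := by rw [hj2]; ring
      rw [h6]
      apply pkdvd
      · rw [← ZMod.intCast_zmod_eq_zero_iff_dvd]
        rw [hW2, hj2, hW1]
        push_cast [ZMod.natCast_val, ZMod.cast_id]
        field_simp
        ring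
      · exact ⟨W1 + W2, rfl⟩
    · rw [Third.Fmap_O g p k a bb α' γ' x hxa hxb,
          Third.Fmap_O g p k a bb α'⁻¹ (-(α'⁻¹ * γ')) x hxa hxb]
  -- build the order isomorphism
  have hSinv' : ∀ δ, δ ∈ Slt ↔ α⁻¹ * δ + (-(α⁻¹ * γ)) ∈ Slt := by
    intro δ
    have h := hSinv (α⁻¹ * δ + (-(α⁻¹ * γ)))
    rw [show α * (α⁻¹ * δ + (-(α⁻¹ * γ))) + γ = δ from by field_simp; ring] at h
    exact h.symm
  have hTinv' : ∀ δ, δ ∈ Sgt ↔ α⁻¹ * δ + (-(α⁻¹ * γ)) ∈ Sgt := by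
    intro δ
    have h := hTinv (α⁻¹ * δ + (-(α⁻¹ * γ)))
    rw [show α * (α⁻¹ * δ + (-(α⁻¹ * γ))) + γ = δ from by field_simp; ring] at h
    exact h.symm
  have hmono := mono α γ hα hSinv hTinv
  have hmono' := mono α⁻¹ (-(α⁻¹ * γ)) (inv_ne_zero hα) hSinv' hTinv'
  have hleft : ∀ x, Fmap g p k a bb α⁻¹ (-(α⁻¹ * γ)) (Fmap g p k a bb α γ x) = x :=
    cancel α γ hα
  have hright : ∀ x, Fmap g p k a bb α γ (Fmap g p k a bb α⁻¹ (-(α⁻¹ * γ)) x) = x := by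
    intro x
    have h := cancel α⁻¹ (-(α⁻¹ * γ)) (inv_ne_zero hα) x
    simp only [inv_inv] at h
    rwa [show -(α * -(α⁻¹ * γ)) = γ from by rw [mul_neg, neg_neg, mul_inv_cancel_left₀ hα]] at h
  let e : P ≃o P :=
    { toEquiv := ⟨Fmap g p k a bb α γ, Fmap g p k a bb α⁻¹ (-(α⁻¹ * γ)), hleft, hright⟩
      map_rel_iff' := by
        intro x y
        show Fmap g p k a bb α γ x ≤ Fmap g p k a bb α γ y ↔ x ≤ y
        constructor
        · intro h
          rcases eq_or_lt_of_le h with heq | hlt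
          · have h2 := congrArg (Fmap g p k a bb α⁻¹ (-(α⁻¹ * γ))) heq
            rw [hleft, hleft] at h2
            exact le_of_eq h2
          · have h2 := hmono' _ _ hlt
            rw [hleft, hleft] at h2
            exact le_of_lt h2
        · intro h
          rcases eq_or_lt_of_le h with heq | hlt
          · exact le_of_eq (congrArg _ heq)
          · exact le_of_lt (hmono _ _ hlt) }
  obtain ⟨m, hm⟩ := hgen e
  have hea : (g ^ m) a = a := by
    rw [hm]
    show Fmap g p k a bb α γ a = a
    have h0 : (g ^ (0:ℤ)) a = a := by rw [zpow_zero]; rfl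
    calc Fmap g p k a bb α γ a = Fmap g p k a bb α γ ((g ^ (0:ℤ)) a) := by rw [h0]
      _ = (g ^ (((α * ((0:ℤ) : ZMod p)).val : ℕ) : ℤ)) a := Third.Fmap_A g p k a bb α γ keya 0
      _ = a := by
          push_cast
          rw [mul_zero, ZMod.val_zero, Nat.cast_zero, zpow_zero]
          rfl
  have hpm : (p:ℤ) ∣ m := (keya m).mp hea
  -- evaluate at bb
  have heb : (g ^ m) bb = (g ^ ((0:ℤ) + (k:ℤ) *
      (((((α - 1) * ((0:ℤ) : ZMod p) + γ) * ((k:ℕ) : ZMod p)⁻¹).val : ℕ) : ℤ))) bb := by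
    rw [hm]
    show Fmap g p k a bb α γ bb = _
    have h0 : (g ^ (0:ℤ)) bb = bb := by rw [zpow_zero]; rfl
    calc Fmap g p k a bb α γ bb = Fmap g p k a bb α γ ((g ^ (0:ℤ)) bb) := by rw [h0]
      _ = _ := Third.Fmap_B g p k a bb α γ hbnotA keyb 0
  have hdb := (Third.eq_iff_of_key g bb _ keyb _ _).mp heb
  have hdbp : (p:ℤ) ∣ m - ((0:ℤ) + (k:ℤ) *
      (((((α - 1) * ((0:ℤ) : ZMod p) + γ) * ((k:ℕ) : ZMod p)⁻¹).val : ℕ) : ℤ)) :=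
    dvd_trans ⟨(k:ℤ), by push_cast; ring⟩ hdb
  have hγ : γ = 0 := by
    have h1 : ((m : ZMod p)) = 0 := by
      rw [ZMod.intCast_zmod_eq_zero_iff_dvd]; exact hpm
    have h2 := (pdvd _ _).mpr hdbp
    rw [h1] at h2
    push_cast [ZMod.natCast_val, ZMod.cast_id] at h2
    field_simp at h2
    linear_combination -h2
  -- evaluate at g bb
  have heb1 : (g ^ m) ((g ^ (1:ℤ)) bb) = (g ^ ((1:ℤ) + (k:ℤ) *
      (((((α - 1) * ((1:ℤ) : ZMod p) + γ) * ((k:ℕ) : ZMod p)⁻¹).val : ℕ) : ℤ))) bb := by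
    rw [hm]
    exact Third.Fmap_B g p k a bb α γ hbnotA keyb 1
  rw [conj] at heb1
  have hdb1 := (Third.eq_iff_of_key g bb _ keyb _ _).mp heb1
  have hdb1p : (p:ℤ) ∣ (m + 1) - ((1:ℤ) + (k:ℤ) *
      (((((α - 1) * ((1:ℤ) : ZMod p) + γ) * ((k:ℕ) : ZMod p)⁻¹).val : ℕ) : ℤ)) :=
    dvd_trans ⟨(k:ℤ), by push_cast; ring⟩ hdb1
  have hα1 : α = 1 := by
    have h1 : ((m : ZMod p)) = 0 := by
      rw [ZMod.intCast_zmod_eq_zero_iff_dvd]; exact hpm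
    have h2 := (pdvd _ _).mpr hdb1p
    push_cast [ZMod.natCast_val, ZMod.cast_id] at h2
    rw [h1, hγ] at h2
    field_simp at h2
    linear_combination -h2
  exact hαγ ⟨hα1, hγ⟩
end
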